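/- arXiv:2101.06366 — 4 statements merged into one kernel-verified Lean document; each statement's English description precedes it below -/
import Mathlib

section
/- Let {X_{k,n} : k,n ≥ 1} be a double array of φ-subgaussian random variables with sup_{k,n ∈ ℕ} τ_φ(X_{k,n}) ≤ 1. Suppose there exists ε₀ > 0 such that for every ε ∈ (0, ε₀], ∫₀^∞ ψ(x) q_φ(x) exp(−ε q_φ(x)) dx < +∞. Then (max_{1 ≤ k ≤ m, 1 ≤ n ≤ j} X_{k,n} − ψ^{−1}(ln(mj)))⁺ → 0 almost surely as m ∨ j → ∞, where u⁺ = max(u, 0). -/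
open MeasureTheory Real Filter Set

/-- An Orlicz N-function: continuous, even, convex, vanishing at `0`, monotone
increasing on `[0, ∞)`, with `φ x / x → 0` as `x → 0⁺` and `φ x / x → ∞` as `x → ∞`. -/
structure IsOrliczN (φ : ℝ → ℝ) : Prop where
  continuous : Continuous φ
  even : ∀ x, φ (-x) = φ x
  convexOn : ConvexOn ℝ Set.univ φ
  map_zero : φ 0 = 0
  strictMonoOn : StrictMonoOn φ (Set.Ici 0)
  tendsto_zero : Tendsto (fun x => φ x / x) (nhdsWithin 0 (Set.Ioi 0)) (nhds 0)
  tendsto_atTop : Tendsto (fun x => φ x / x) atTop atTop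

/-- `ψ` is the Young–Fenchel transform of `φ`: `ψ x = sup_{y ∈ ℝ} (x * y - φ y)`. -/
def IsYoungFenchel (φ ψ : ℝ → ℝ) : Prop :=
  ∀ x, IsLUB {z | ∃ y, z = x * y - φ y} (ψ x)

/-- The moment generating function bound `E exp(t X) ≤ exp (φ (a t))` with constant `a > 0`. -/
def PhiMGF (φ : ℝ → ℝ) {Ω : Type*} [MeasurableSpace Ω] (P : Measure Ω) (X : Ω → ℝ)
    (a : ℝ) : Prop :=
  0 < a ∧ ∀ t : ℝ, Integrable (fun ω => Real.exp (t * X ω)) P ∧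
    ∫ ω, Real.exp (t * X ω) ∂P ≤ Real.exp (φ (a * t))

/-- `X` is a `φ`-subgaussian random variable: centered, with an MGF bound. -/
def IsPhiSubGaussian (φ : ℝ → ℝ) {Ω : Type*} [MeasurableSpace Ω] (P : Measure Ω)
    (X : Ω → ℝ) : Prop :=
  Integrable X P ∧ (∫ ω, X ω ∂P) = 0 ∧ ∃ a, PhiMGF φ P X a

/-- The `φ`-subgaussian norm `τ_φ(X)`. -/
noncomputable def tauPhi (φ : ℝ → ℝ) {Ω : Type*} [MeasurableSpace Ω] (P : Measure Ω)
    (X : Ω → ℝ) : ℝ :=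
  sInf {a | PhiMGF φ P X a}

/-- `max_{1 ≤ k ≤ m, 1 ≤ n ≤ j} X_{k,n}(ω)`. -/
noncomputable def runMax {Ω : Type*} (X : ℕ → ℕ → Ω → ℝ) (m j : ℕ) (ω : Ω) : ℝ :=
  sSup {y | ∃ k n, 1 ≤ k ∧ k ≤ m ∧ 1 ≤ n ∧ n ≤ j ∧ y = X k n ω}

/-- Convergence of a double array `b m j` to `l` as `m ∨ j → ∞`. -/
def TendstoMaxIdx (b : ℕ → ℕ → ℝ) (l : ℝ) : Prop :=
  ∀ ε > 0, ∃ N : ℕ, ∀ m j : ℕ, 1 ≤ m → 1 ≤ j → N ≤ max m j → |b m j - l| < ε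

open scoped ENNReal

/-!
Chernoff's bound, optimised through the Young–Fenchel transform, gives `P(X > z) ≤ exp(-ψ w)`
for every `0 < w < z`, uniformly over the array because `τ_φ ≤ 1`. Group the indices into dyadic
blocks `2^i ≤ m < 2^(i+1)`, `2^l ≤ j < 2^(l+1)` and put `u_s = ψ⁻¹(s ln 2)`. Since
`ψ(u + ε/2) ≥ ψ(u) + (ε/2) q(u)`, a union bound over the `4 · 2^(i+l)` variables of a block gives
`P(max > u_(i+l) + ε) ≤ 4 exp(-(ε/2) q(u_(i+l))) ≤ 4 exp(-(ε/4) q(u_i)) exp(-(ε/4) q(u_l))`.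
The series `∑ exp(-η q(u_p))` is dominated by `∫ ψ q exp(-η q)`, because `ψ ≥ ln 2` and
`∫ q = ln 2` on each `(u_(p+1), u_(p+2)]`. By Borel–Cantelli, almost surely only finitely many
blocks exceed their level by `ε`.
-/

structure HasNondecreasingDensity (ψ q : ℝ → ℝ) : Prop where
  density_monotoneOn : MonotoneOn q (Ici 0)
  density_nonneg : ∀ x, 0 ≤ x → 0 ≤ q x
  eq_integral : ∀ x, 0 ≤ x → ψ x = ∫ t in (0:ℝ)..x, q t

namespace HasNondecreasingDensity

variable {ψ q : ℝ → ℝ}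

theorem intervalIntegrable (hd : HasNondecreasingDensity ψ q) {a b : ℝ} (ha : 0 ≤ a)
    (hb : 0 ≤ b) : IntervalIntegrable q volume a b :=
  (hd.density_monotoneOn.mono fun _ hx ↦ (le_min ha hb).trans hx.1).intervalIntegrable

theorem sub_eq_integral (hd : HasNondecreasingDensity ψ q) {a b : ℝ} (ha : 0 ≤ a)
    (hab : a ≤ b) : ψ b - ψ a = ∫ x in a..b, q x := by
  rw [hd.eq_integral a ha, hd.eq_integral b (ha.trans hab),
    intervalIntegral.integral_interval_sub_left (hd.intervalIntegrable le_rfl (ha.trans hab))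
      (hd.intervalIntegrable le_rfl ha)]

theorem monotoneOn (hd : HasNondecreasingDensity ψ q) : MonotoneOn ψ (Ici 0) := by
  intro a ha b _ hab
  have hsub := hd.sub_eq_integral ha hab
  have hnonneg : 0 ≤ ∫ x in a..b, q x :=
    intervalIntegral.integral_nonneg hab fun x hx ↦ hd.density_nonneg x (le_trans ha hx.1)
  linarith

theorem add_mul_le (hd : HasNondecreasingDensity ψ q) {u η : ℝ} (hu : 0 ≤ u) (hη : 0 ≤ η) :
    ψ u + η * q u ≤ ψ (u + η) := by
  have hsub := hd.sub_eq_integral hu (le_add_of_nonneg_right hη)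
  have hconst : ∫ _ in u..u + η, q u ≤ ∫ x in u..u + η, q x :=
    intervalIntegral.integral_mono_on (le_add_of_nonneg_right hη) intervalIntegrable_const
      (hd.intervalIntegrable hu (by linarith)) fun x hx ↦
        hd.density_monotoneOn hu (hu.trans hx.1 : (0:ℝ) ≤ x) hx.1
  simp only [intervalIntegral.integral_const, add_sub_cancel_left, smul_eq_mul] at hconst
  linarith

theorem lintegral_Ioc_eq (hd : HasNondecreasingDensity ψ q) {a b : ℝ} (ha : 0 ≤ a)
    (hab : a ≤ b) : ∫⁻ x in Ioc a b, ENNReal.ofReal (q x) = ENNReal.ofReal (ψ b - ψ a) := by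
  rw [hd.sub_eq_integral ha hab, intervalIntegral.integral_of_le hab,
    ofReal_integral_eq_lintegral_ofReal]
  · exact (intervalIntegrable_iff_integrableOn_Ioc_of_le hab).1
      (hd.intervalIntegrable ha (ha.trans hab))
  · exact ae_restrict_of_forall_mem measurableSet_Ioc fun x hx ↦
      hd.density_nonneg x (ha.trans hx.1.le)

end HasNondecreasingDensity

theorem MonotoneOn.monotoneOn_of_rightInvOn {α β : Type*} [PartialOrder α] [LinearOrder β]
    {f : β → α} {g : α → β} {s : Set α} {t : Set β} (hf : MonotoneOn f t) (hg : MapsTo g s t)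
    (hfg : RightInvOn g f s) : MonotoneOn g s := by
  intro a ha b hb hab
  by_contra! hlt
  have := hf (hg hb) (hg ha) hlt.le
  rw [hfg ha, hfg hb] at this
  exact hlt.ne (by rw [le_antisymm hab this])

theorem le_exp_neg_of_isLUB {S : Set ℝ} {v p : ℝ} (hv : IsLUB S v) (hp : 0 ≤ p)
    (hS : ∀ s ∈ S, p ≤ Real.exp (-s)) : p ≤ Real.exp (-v) := by
  rcases hp.eq_or_lt with rfl | hp
  · exact (Real.exp_pos _).le
  have hv : v ≤ -Real.log p := hv.2 fun s hs ↦ by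
    have := Real.log_le_log hp (hS s hs)
    rw [Real.log_exp] at this
    linarith
  calc p = Real.exp (Real.log p) := (Real.exp_log hp).symm
    _ ≤ Real.exp (-v) := Real.exp_le_exp.2 (by linarith)

theorem PhiMGF.measureReal_le_exp_neg {Ω : Type*} [MeasurableSpace Ω] {P : Measure Ω}
    [IsFiniteMeasure P] {φ ψ : ℝ → ℝ} (hφ : ∀ x, φ (-x) = φ x) (hψ : IsYoungFenchel φ ψ)
    {X : Ω → ℝ} {a : ℝ} (ha : PhiMGF φ P X a) {z : ℝ} (hz : 0 ≤ z) :
    P.real {ω | z ≤ X ω} ≤ Real.exp (-ψ (z / a)) := by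
  obtain ⟨ha, hmgf⟩ := ha
  have chernoff : ∀ y, 0 ≤ y → P.real {ω | z ≤ X ω} ≤ Real.exp (-(z / a * y - φ y)) := by
    intro y hy
    have hay : a * (y / a) = y := mul_div_cancel₀ y ha.ne'
    calc P.real {ω | z ≤ X ω} ≤ Real.exp (-(y / a) * z) * ProbabilityTheory.mgf X P (y / a) :=
          ProbabilityTheory.measure_ge_le_exp_mul_mgf z (div_nonneg hy ha.le) (hmgf _).1
      _ ≤ Real.exp (-(y / a) * z) * Real.exp (φ y) := by
          gcongr
          simpa only [ProbabilityTheory.mgf, hay] using (hmgf (y / a)).2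
      _ = Real.exp (-(z / a * y - φ y)) := by rw [← Real.exp_add]; ring_nf
  refine le_exp_neg_of_isLUB (hψ _) measureReal_nonneg ?_
  rintro s ⟨y, rfl⟩
  -- A negative `y` does no better than `|y|`, since `φ` is even and `z / a ≥ 0`.
  refine (chernoff |y| (abs_nonneg y)).trans (Real.exp_le_exp.2 (neg_le_neg ?_))
  rcases abs_cases y with ⟨hy, -⟩ | ⟨hy, hy0⟩
  · rw [hy]
  · rw [hy, hφ]
    nlinarith [div_nonneg hz ha.le]

theorem IsPhiSubGaussian.measureReal_le_exp_neg {Ω : Type*} [MeasurableSpace Ω]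
    {P : Measure Ω} [IsFiniteMeasure P] {φ ψ : ℝ → ℝ} (hφ : ∀ x, φ (-x) = φ x)
    (hψ : IsYoungFenchel φ ψ) (hψ_mono : MonotoneOn ψ (Ici 0)) {X : Ω → ℝ}
    (hX : IsPhiSubGaussian φ P X) (hτ : tauPhi φ P X ≤ 1) {w z : ℝ} (hw : 0 < w) (hwz : w < z) :
    P.real {ω | z ≤ X ω} ≤ Real.exp (-ψ w) := by
  obtain ⟨-, -, a₀, ha₀⟩ := hX
  obtain ⟨a, ha, haz⟩ : ∃ a, PhiMGF φ P X a ∧ a < z / w :=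
    exists_lt_of_csInf_lt ⟨a₀, ha₀⟩ (hτ.trans_lt ((one_lt_div hw).2 hwz))
  have hwa : w ≤ z / a := by
    rw [le_div_iff₀ ha.1, mul_comm]
    exact ((lt_div_iff₀ hw).1 haz).le
  refine (ha.measureReal_le_exp_neg hφ hψ (hw.trans hwz).le).trans ?_
  exact Real.exp_le_exp.2 (neg_le_neg (hψ_mono hw.le (hw.le.trans hwa) hwa))

theorem runMax_eq_sup' {Ω : Type*} (X : ℕ → ℕ → Ω → ℝ) {m j : ℕ} (hm : 1 ≤ m) (hj : 1 ≤ j)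
    (ω : Ω) : runMax X m j ω = (Finset.Icc 1 m ×ˢ Finset.Icc 1 j).sup'
      (Finset.nonempty_Icc.2 hm |>.product (Finset.nonempty_Icc.2 hj)) (fun p ↦ X p.1 p.2 ω) := by
  rw [Finset.sup'_eq_csSup_image, runMax]
  congr 1
  ext y
  simp only [mem_ofPred_eq, Finset.coe_product, Finset.coe_Icc, mem_image, mem_prod, mem_Icc,
    Prod.exists]
  constructor
  · rintro ⟨k, n, hk1, hk2, hn1, hn2, rfl⟩
    exact ⟨k, n, ⟨⟨hk1, hk2⟩, hn1, hn2⟩, rfl⟩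
  · rintro ⟨k, n, ⟨⟨hk1, hk2⟩, hn1, hn2⟩, rfl⟩
    exact ⟨k, n, hk1, hk2, hn1, hn2, rfl⟩

theorem runMax_mono {Ω : Type*} (X : ℕ → ℕ → Ω → ℝ) {m j m' j' : ℕ} (hm : 1 ≤ m) (hj : 1 ≤ j)
    (hmm' : m ≤ m') (hjj' : j ≤ j') (ω : Ω) : runMax X m j ω ≤ runMax X m' j' ω := by
  rw [runMax_eq_sup' X hm hj, runMax_eq_sup' X (hm.trans hmm') (hj.trans hjj')]
  exact Finset.sup'_mono _
    (Finset.product_subset_product (Finset.Icc_subset_Icc_right hmm')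
      (Finset.Icc_subset_Icc_right hjj')) _

theorem measure_lt_runMax_le {Ω : Type*} [MeasurableSpace Ω] {P : Measure Ω}
    (X : ℕ → ℕ → Ω → ℝ) {m j : ℕ} (hm : 1 ≤ m) (hj : 1 ≤ j) {z : ℝ} {B : ℝ≥0∞}
    (hX : ∀ k n, 1 ≤ k → 1 ≤ n → P {ω | z < X k n ω} ≤ B) :
    P {ω | z < runMax X m j ω} ≤ (m * j : ℕ) * B := by
  have hsub : {ω | z < runMax X m j ω} ⊆
      ⋃ p ∈ Finset.Icc 1 m ×ˢ Finset.Icc 1 j, {ω | z < X p.1 p.2 ω} := by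
    intro ω hω
    simp only [mem_ofPred_eq, runMax_eq_sup' X hm hj, Finset.lt_sup'_iff] at hω
    simpa only [mem_iUnion, exists_prop, mem_ofPred_eq] using hω
  calc P {ω | z < runMax X m j ω}
      ≤ ∑ p ∈ Finset.Icc 1 m ×ˢ Finset.Icc 1 j, P {ω | z < X p.1 p.2 ω} :=
        (measure_mono hsub).trans (measure_biUnion_finset_le _ _)
    _ ≤ ∑ _p ∈ Finset.Icc 1 m ×ˢ Finset.Icc 1 j, B := Finset.sum_le_sum fun p hp ↦ by
        simp only [Finset.mem_product, Finset.mem_Icc] at hp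
        exact hX _ _ hp.1.1 hp.2.1
    _ = (m * j : ℕ) * B := by simp

theorem HasNondecreasingDensity.tsum_ofReal_exp_neg_ne_top {ψ q : ℝ → ℝ}
    (hd : HasNondecreasingDensity ψ q) {t : ℕ → ℝ} (ht : Monotone t) (ht0 : ∀ p, 0 ≤ t p)
    {c η : ℝ} (hc : 0 < c) (hη : 0 ≤ η) (hψt : ∀ p, ψ (t p) = p * c)
    (hI : ∫⁻ x in Ioi 0, ENNReal.ofReal (ψ x * q x * Real.exp (-(η * q x))) ≠ ⊤) :
    ∑' p, ENNReal.ofReal (Real.exp (-(η * q (t p)))) ≠ ⊤ := by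
  set f : ℝ → ℝ≥0∞ := fun x ↦ ENNReal.ofReal (ψ x * q x * Real.exp (-(η * q x)))
  set g : ℕ → ℝ≥0∞ := fun p ↦ ENNReal.ofReal (Real.exp (-(η * q (t p))))
  have hblock : ∀ p, ENNReal.ofReal (c * c) * g (p + 2) ≤
      ∫⁻ x in Ioc (t (p + 1)) (t (p + 2)), f x := by
    intro p
    have hle : t (p + 1) ≤ t (p + 2) := ht (by omega)
    calc ENNReal.ofReal (c * c) * g (p + 2)
        = ∫⁻ x in Ioc (t (p + 1)) (t (p + 2)),
            ENNReal.ofReal (c * Real.exp (-(η * q (t (p + 2))))) * ENNReal.ofReal (q x) := by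
          rw [lintegral_const_mul' _ _ ENNReal.ofReal_ne_top, hd.lintegral_Ioc_eq (ht0 _) hle,
            hψt, hψt, ← ENNReal.ofReal_mul (by positivity), ← ENNReal.ofReal_mul (by positivity)]
          congr 1
          push_cast
          ring
      _ ≤ ∫⁻ x in Ioc (t (p + 1)) (t (p + 2)), f x := by
          refine setLIntegral_mono' measurableSet_Ioc fun x hx ↦ ?_
          have hx0 : 0 ≤ x := (ht0 _).trans hx.1.le
          have hcψ : c ≤ ψ x := by
            have := hd.monotoneOn (ht0 (p + 1)) hx0 hx.1.le
            rw [hψt] at this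
            push_cast at this
            nlinarith [(Nat.cast_nonneg p : (0:ℝ) ≤ p)]
          have hexp : Real.exp (-(η * q (t (p + 2)))) ≤ Real.exp (-(η * q x)) :=
            Real.exp_le_exp.2 (neg_le_neg (mul_le_mul_of_nonneg_left
              (hd.density_monotoneOn hx0 (ht0 _) hx.2) hη))
          rw [← ENNReal.ofReal_mul (by positivity)]
          refine ENNReal.ofReal_le_ofReal ?_
          calc c * Real.exp (-(η * q (t (p + 2)))) * q x
              ≤ ψ x * Real.exp (-(η * q x)) * q x := by
                gcongr
                · exact hd.density_nonneg x hx0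
                · exact hc.le.trans hcψ
            _ = ψ x * q x * Real.exp (-(η * q x)) := by ring
  have htail : ENNReal.ofReal (c * c) * ∑' p, g (p + 2) ≠ ⊤ := by
    refine ne_top_of_le_ne_top hI ?_
    calc ENNReal.ofReal (c * c) * ∑' p, g (p + 2)
        ≤ ∑' p, ∫⁻ x in Ioc (t (p + 1)) (t (p + 2)), f x := by
          rw [← ENNReal.tsum_mul_left]
          exact ENNReal.tsum_le_tsum hblock
      _ = ∫⁻ x in ⋃ p, Ioc (t (p + 1)) (t (p + 2)), f x :=
          (lintegral_iUnion (fun _ ↦ measurableSet_Ioc)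
            (Monotone.pairwise_disjoint_on_Ioc_succ fun _ _ h ↦ ht (by omega)) f).symm
      _ ≤ ∫⁻ x in Ioi 0, f x := lintegral_mono_set <| iUnion_subset fun p _ hx ↦
          (ht0 (p + 1)).trans_lt hx.1
  have hg : ∑' p, g (p + 2) ≠ ⊤ :=
    (ENNReal.lt_top_of_mul_ne_top_right htail (ENNReal.ofReal_pos.2 (mul_pos hc hc)).ne').ne
  rw [← ENNReal.summable.sum_add_tsum_nat_add' (k := 2)]
  exact ENNReal.add_ne_top.2 ⟨ENNReal.sum_ne_top.2 fun _ _ ↦ ENNReal.ofReal_ne_top, hg⟩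

theorem tsum_ofReal_exp_neg_mul_add_ne_top {Q : ℕ → ℝ} (hQ : Monotone Q) {η : ℝ} (hη : 0 ≤ η)
    (h : ∑' p, ENNReal.ofReal (Real.exp (-(η / 2 * Q p))) ≠ ⊤) :
    ∑' p : ℕ × ℕ, ENNReal.ofReal (Real.exp (-(η * Q (p.1 + p.2)))) ≠ ⊤ := by
  set g : ℕ → ℝ≥0∞ := fun p ↦ ENNReal.ofReal (Real.exp (-(η / 2 * Q p)))
  have hsplit : ∀ p : ℕ × ℕ,
      ENNReal.ofReal (Real.exp (-(η * Q (p.1 + p.2)))) ≤ g p.1 * g p.2 := by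
    rintro ⟨i, l⟩
    rw [← ENNReal.ofReal_mul (Real.exp_pos _).le, ← Real.exp_add]
    refine ENNReal.ofReal_le_ofReal (Real.exp_le_exp.2 ?_)
    nlinarith [hQ (Nat.le_add_right i l), hQ (Nat.le_add_left l i)]
  refine ne_top_of_le_ne_top ?_ (ENNReal.tsum_le_tsum hsplit)
  rw [ENNReal.tsum_prod (f := fun i l ↦ g i * g l)]
  simp only [ENNReal.tsum_mul_left, ENNReal.tsum_mul_right]
  exact ENNReal.mul_ne_top h h

theorem measure_add_lt_runMax_two_pow_le {Ω : Type*} [MeasurableSpace Ω] {P : Measure Ω}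
    [IsFiniteMeasure P] {φ ψ q : ℝ → ℝ} (hφ : ∀ x, φ (-x) = φ x) (hψ : IsYoungFenchel φ ψ)
    (hd : HasNondecreasingDensity ψ q) {X : ℕ → ℕ → Ω → ℝ}
    (hsub : ∀ k n : ℕ, 1 ≤ k → 1 ≤ n → IsPhiSubGaussian φ P (X k n))
    (hτ : ∀ k n : ℕ, 1 ≤ k → 1 ≤ n → tauPhi φ P (X k n) ≤ 1) (i l : ℕ) {u ε : ℝ} (hu : 0 ≤ u)
    (hψu : ψ u = (i + l : ℕ) * Real.log 2) (hε : 0 < ε) :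
    P {ω | u + ε < runMax X (2 ^ (i + 1)) (2 ^ (l + 1)) ω} ≤
      ENNReal.ofReal (4 * Real.exp (-(ε / 2 * q u))) := by
  have hX : ∀ k n, 1 ≤ k → 1 ≤ n → P {ω | u + ε < X k n ω} ≤
      ENNReal.ofReal (Real.exp (-(ψ u + ε / 2 * q u))) := by
    intro k n hk hn
    calc P {ω | u + ε < X k n ω} ≤ P {ω | u + ε ≤ X k n ω} :=
          measure_mono fun _ hω ↦ le_of_lt (α := ℝ) hω
      _ = ENNReal.ofReal (P.real {ω | u + ε ≤ X k n ω}) := (ofReal_measureReal).symm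
      _ ≤ ENNReal.ofReal (Real.exp (-ψ (u + ε / 2))) := ENNReal.ofReal_le_ofReal <|
          (hsub k n hk hn).measureReal_le_exp_neg hφ hψ hd.monotoneOn (hτ k n hk hn)
            (by positivity) (by linarith)
      _ ≤ ENNReal.ofReal (Real.exp (-(ψ u + ε / 2 * q u))) := ENNReal.ofReal_le_ofReal <|
          Real.exp_le_exp.2 (neg_le_neg (hd.add_mul_le hu (by positivity)))
  refine (measure_lt_runMax_le X Nat.one_le_two_pow Nat.one_le_two_pow hX).trans_eq ?_
  rw [← ENNReal.ofReal_natCast, ← ENNReal.ofReal_mul (Nat.cast_nonneg _), hψu]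
  have hexp : Real.exp ((i + l : ℕ) * Real.log 2) = 2 ^ (i + l) := by
    rw [Real.exp_nat_mul, Real.exp_log two_pos]
  congr 1
  rw [neg_add, Real.exp_add, Real.exp_neg, hexp]
  push_cast
  field_simp
  ring

theorem natLog_two_mul_log_two_le_log (m : ℕ) : (Nat.log 2 m : ℝ) * Real.log 2 ≤ Real.log m := by
  have := Real.natLog_le_logb m 2
  rwa [Real.logb, Nat.cast_ofNat, le_div_iff₀ (Real.log_pos one_lt_two)] at this

theorem tendsto_prodMap_natLog_two_cofinite :
    Tendsto (Prod.map (Nat.log 2) (Nat.log 2)) cofinite cofinite := by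
  have hlog : Tendsto (Nat.log 2) atTop atTop := tendsto_atTop_atTop.2 fun b ↦
    ⟨2 ^ b, fun _ h ↦ Nat.le_log_of_pow_le one_lt_two h⟩
  rw [← coprod_cofinite, Nat.cofinite_eq_atTop]
  exact hlog.prodMap_coprod hlog

theorem runMax_sub_psiInv_log_le_of_dyadic {Ω : Type*} (X : ℕ → ℕ → Ω → ℝ) {ψinv : ℝ → ℝ}
    (hψinv : MonotoneOn ψinv (Ici 0)) {m j : ℕ} (hm : 1 ≤ m) (hj : 1 ≤ j) {ω : Ω} {ε : ℝ}
    (h : runMax X (2 ^ (Nat.log 2 m + 1)) (2 ^ (Nat.log 2 j + 1)) ω ≤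
      ψinv ((Nat.log 2 m + Nat.log 2 j : ℕ) * Real.log 2) + ε) :
    runMax X m j ω - ψinv (Real.log ((m * j : ℕ) : ℝ)) ≤ ε := by
  have hlog : ((Nat.log 2 m + Nat.log 2 j : ℕ) : ℝ) * Real.log 2 ≤ Real.log ((m * j : ℕ) : ℝ) := by
    rw [Nat.cast_mul, Real.log_mul (by positivity) (by positivity)]
    push_cast
    linarith [natLog_two_mul_log_two_le_log m, natLog_two_mul_log_two_le_log j]
  have hrun := runMax_mono X hm hj (Nat.lt_pow_succ_log_self one_lt_two m).le
    (Nat.lt_pow_succ_log_self one_lt_two j).le ω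
  have hinv := hψinv (by positivity : (0:ℝ) ≤ _)
    (Real.log_nonneg (by exact_mod_cast Nat.mul_le_mul hm hj)) hlog
  linarith

theorem ae_eventually_runMax_sub_psiInv_le {Ω : Type*} [MeasurableSpace Ω] {P : Measure Ω}
    [IsFiniteMeasure P] {φ ψ ψinv q : ℝ → ℝ} (hφ : ∀ x, φ (-x) = φ x)
    (hψ : IsYoungFenchel φ ψ) (hd : HasNondecreasingDensity ψ q)
    (hψinv : ∀ x, 0 ≤ x → 0 ≤ ψinv x ∧ ψ (ψinv x) = x) {X : ℕ → ℕ → Ω → ℝ}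
    (hsub : ∀ k n : ℕ, 1 ≤ k → 1 ≤ n → IsPhiSubGaussian φ P (X k n))
    (hτ : ∀ k n : ℕ, 1 ≤ k → 1 ≤ n → tauPhi φ P (X k n) ≤ 1) {ε : ℝ} (hε : 0 < ε)
    (hI : ∫⁻ x in Ioi 0, ENNReal.ofReal (ψ x * q x * Real.exp (-(ε / 4 * q x))) ≠ ⊤) :
    ∀ᵐ ω ∂P, ∀ᶠ p : ℕ × ℕ in cofinite, 1 ≤ p.1 → 1 ≤ p.2 →
      runMax X p.1 p.2 ω - ψinv (Real.log ((p.1 * p.2 : ℕ) : ℝ)) ≤ ε := by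
  have hψinv_mono : MonotoneOn ψinv (Ici 0) := hd.monotoneOn.monotoneOn_of_rightInvOn
    (fun x hx ↦ (hψinv x hx).1) fun x hx ↦ (hψinv x hx).2
  set t : ℕ → ℝ := fun s ↦ ψinv (s * Real.log 2)
  have ht0 : ∀ s, 0 ≤ t s := fun s ↦ (hψinv _ (by positivity)).1
  have ht : Monotone t := fun s s' h ↦ hψinv_mono (by positivity : (0:ℝ) ≤ s * Real.log 2)
    (by positivity : (0:ℝ) ≤ s' * Real.log 2) (by gcongr)
  set A : ℕ × ℕ → Set Ω := fun p ↦
    {ω | t (p.1 + p.2) + ε < runMax X (2 ^ (p.1 + 1)) (2 ^ (p.2 + 1)) ω}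
  have hA : ∑' p, P (A p) ≠ ⊤ := by
    have hsum₁ := hd.tsum_ofReal_exp_neg_ne_top ht ht0 (Real.log_pos one_lt_two)
      (by positivity) (fun s ↦ (hψinv _ (by positivity)).2) hI
    rw [show ε / 4 = ε / 2 / 2 by ring] at hsum₁
    have hsum := tsum_ofReal_exp_neg_mul_add_ne_top
      (fun _ _ h ↦ hd.density_monotoneOn (ht0 _) (ht0 _) (ht h)) (by positivity) hsum₁
    refine ne_top_of_le_ne_top ?_ (ENNReal.tsum_le_tsum fun p : ℕ × ℕ ↦
      measure_add_lt_runMax_two_pow_le hφ hψ hd hsub hτ p.1 p.2 (ht0 _)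
        (hψinv _ (by positivity)).2 hε)
    simp only [ENNReal.ofReal_mul zero_le_four, ENNReal.tsum_mul_left]
    exact ENNReal.mul_ne_top ENNReal.ofReal_ne_top hsum
  filter_upwards [ae_finite_setOfPred_mem hA] with ω hω
  filter_upwards [tendsto_prodMap_natLog_two_cofinite.eventually hω.eventually_cofinite_notMem]
  rintro ⟨m, j⟩ hmj (hm : 1 ≤ m) (hj : 1 ≤ j)
  simp only [A, Prod.map, mem_ofPred_eq, not_lt] at hmj
  exact runMax_sub_psiInv_log_le_of_dyadic X hψinv_mono hm hj hmj

theorem tendstoMaxIdx_of_eventually_cofinite {b : ℕ → ℕ → ℝ} {l : ℝ}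
    (h : ∀ ε > 0, ∀ᶠ p : ℕ × ℕ in cofinite, 1 ≤ p.1 → 1 ≤ p.2 → |b p.1 p.2 - l| < ε) :
    TendstoMaxIdx b l := by
  intro ε hε
  obtain ⟨⟨N₁, N₂⟩, hN⟩ := (eventually_cofinite.1 (h ε hε)).bddAbove
  refine ⟨max N₁ N₂ + 1, fun m j hm hj hmj ↦ ?_⟩
  by_contra hbad
  have := hN (show (m, j) ∈ {p : ℕ × ℕ | ¬(1 ≤ p.1 → 1 ≤ p.2 → |b p.1 p.2 - l| < ε)} from
    fun hp ↦ hbad (hp hm hj))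
  simp only [Prod.mk_le_mk] at this
  omega

theorem ae_tendstoMaxIdx_posPart_zero {Ω : Type*} [MeasurableSpace Ω] {P : Measure Ω}
    {b : Ω → ℕ → ℕ → ℝ} {ε₀ : ℝ} (hε₀ : 0 < ε₀)
    (h : ∀ ε, 0 < ε → ε ≤ ε₀ → ∀ᵐ ω ∂P, ∀ᶠ p : ℕ × ℕ in cofinite, 1 ≤ p.1 → 1 ≤ p.2 →
      b ω p.1 p.2 ≤ ε) :
    ∀ᵐ ω ∂P, TendstoMaxIdx (fun m j ↦ max (b ω m j) 0) 0 := by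
  have hseq : ∀ n : ℕ, 0 < ε₀ / (n + 1) := fun n ↦ by positivity
  filter_upwards [ae_all_iff.2 fun n : ℕ ↦ h _ (hseq n)
    (div_le_self hε₀.le (by simp))] with ω hω
  refine tendstoMaxIdx_of_eventually_cofinite fun ε hε ↦ ?_
  obtain ⟨n, hn⟩ := exists_nat_gt (ε₀ / ε)
  have hlt : ε₀ / (n + 1) < ε := by
    rw [div_lt_iff₀ (by positivity)]
    rw [div_lt_iff₀ hε] at hn
    nlinarith
  filter_upwards [hω n] with p hp hp₁ hp₂
  rw [sub_zero, abs_of_nonneg (le_max_right _ _)]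
  exact max_lt ((hp hp₁ hp₂).trans_lt hlt) hε

/-- Corollary 1: for a double array of `φ`-subgaussian random variables
with `sup_{k,n} τ_φ(X_{k,n}) ≤ 1`, if `∫₀^∞ ψ(x) q_φ(x) exp(-ε q_φ(x)) dx < ∞` for all small
`ε > 0`, then `(max_{1≤k≤m,1≤n≤j} X_{k,n} - ψ⁻¹(ln(mj)))⁺ → 0` a.s. as `m ∨ j → ∞`. -/
theorem runMax_pos_part_tendsto_zero_of_tau_le_one
    {Ω : Type*} [MeasurableSpace Ω] (P : Measure Ω) [IsProbabilityMeasure P]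
    (φ ψ ψinv q : ℝ → ℝ) (hφ : IsOrliczN φ) (hψ : IsYoungFenchel φ ψ)
    (hq_mono : MonotoneOn q (Set.Ici 0)) (hq_nonneg : ∀ x, 0 ≤ x → 0 ≤ q x)
    (hψq : ∀ x, 0 ≤ x → ψ x = ∫ t in (0:ℝ)..x, q t)
    (hψinv : ∀ x, 0 ≤ x → 0 ≤ ψinv x ∧ ψ (ψinv x) = x)
    (X : ℕ → ℕ → Ω → ℝ)
    (hsub : ∀ k n : ℕ, 1 ≤ k → 1 ≤ n → IsPhiSubGaussian φ P (X k n))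
    (hτ : ∀ k n : ℕ, 1 ≤ k → 1 ≤ n → tauPhi φ P (X k n) ≤ 1)
    (hint : ∃ ε₀ > (0:ℝ), ∀ ε : ℝ, 0 < ε → ε ≤ ε₀ →
      ∫⁻ x in Set.Ioi (0:ℝ),
        ENNReal.ofReal (ψ x * q x * Real.exp (-(ε * q x))) < ⊤) :
    ∀ᵐ ω ∂P, TendstoMaxIdx
      (fun m j => max (runMax X m j ω - ψinv (Real.log ((m * j : ℕ) : ℝ))) 0) 0 := by
  obtain ⟨ε₀, hε₀, hint⟩ := hint
  have hd : HasNondecreasingDensity ψ q := ⟨hq_mono, hq_nonneg, hψq⟩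
  refine ae_tendstoMaxIdx_posPart_zero (by positivity : 0 < 4 * ε₀) fun ε hε hεε₀ ↦ ?_
  exact ae_eventually_runMax_sub_psiInv_le hφ.even hψ hd hψinv hsub hτ hε
    (hint _ (by positivity) (by linarith)).ne
end

section
/- Let {X_{k,n} : k,n ≥ 1} be a double array of φ-subgaussian random variables with τ_φ(X_{k,n}) > 0 for all k,n, let g : [0,∞) → (0,∞) be non-decreasing, and let a_{m,j} = g(ln(mj)) ψ^{−1}(ln(mj)). Let f : [1,∞) → ℝ and α ∈ ℝ be such that g(ln(mj)) / τ_φ(X_{k,n}) ≥ f(mj/(kn)) ≥ 1 for all m,j ≥ 1, 1 ≤ k ≤ m, 1 ≤ n ≤ j, and such that Σ_{m=1}^∞ Σ_{j=1}^∞ Σ_{k=1}^m Σ_{n=1}^j (mj)^{−α − f(mj/(kn))} < +∞. Then Σ_{m=1}^∞ Σ_{j=1}^∞ (mj)^{−α} P(Y⁺_{m,j} > 0) < +∞. -/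
open MeasureTheory Real Filter Set

/-!
A Chernoff bound with the Young–Fenchel transform gives
`P(X_{k,n} ≥ g(L) ψ⁻¹(L)) ≤ exp(-ψ(g(L) ψ⁻¹(L) / τ_φ(X_{k,n})))` for `L = ln(mj)`.
Since `g(L)/τ_φ(X_{k,n}) ≥ f(mj/(kn)) ≥ 1`, and `ψ` is monotone with `c ψ(x) ≤ ψ(c x)`
for `c ≥ 1`, the exponent is at least `f(mj/(kn)) L`, so this probability is at most
`(mj)^{-f(mj/(kn))}`. A union bound over `k ≤ m`, `n ≤ j` then dominates the series
term by term by the convergent quadruple series.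
-/

namespace IsOrliczN

variable {φ : ℝ → ℝ}

theorem apply_abs (hφ : IsOrliczN φ) (x : ℝ) : φ |x| = φ x := by
  rcases le_total 0 x with h | h
  · rw [abs_of_nonneg h]
  · rw [abs_of_nonpos h, hφ.even]

theorem nonneg (hφ : IsOrliczN φ) (x : ℝ) : 0 ≤ φ x := by
  rw [← hφ.apply_abs, ← hφ.map_zero]
  exact hφ.strictMonoOn.monotoneOn self_mem_Ici (abs_nonneg x) (abs_nonneg x)

end IsOrliczN

namespace IsYoungFenchel

variable {φ ψ : ℝ → ℝ}

theorem monotoneOn (hφ : IsOrliczN φ) (hψ : IsYoungFenchel φ ψ) : MonotoneOn ψ (Ici 0) := by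
  intro x hx y _ hxy
  refine (hψ x).2 ?_
  rintro _ ⟨w, rfl⟩
  have hmul : x * w ≤ y * |w| := (mul_le_mul_of_nonneg_left (le_abs_self w) hx).trans
    (mul_le_mul_of_nonneg_right hxy (abs_nonneg w))
  calc x * w - φ w ≤ y * |w| - φ |w| := by rw [hφ.apply_abs]; linarith
    _ ≤ ψ y := (hψ y).1 ⟨|w|, rfl⟩

theorem mul_le_apply_mul (hφ : ∀ x, 0 ≤ φ x) (hψ : IsYoungFenchel φ ψ) {c : ℝ} (hc : 1 ≤ c)
    (x : ℝ) : c * ψ x ≤ ψ (c * x) := by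
  have hc0 : 0 < c := one_pos.trans_le hc
  rw [← le_div_iff₀' hc0]
  refine (hψ x).2 ?_
  rintro _ ⟨w, rfl⟩
  rw [le_div_iff₀' hc0]
  have h := (hψ (c * x)).1 ⟨w, rfl⟩
  nlinarith [hφ w]

end IsYoungFenchel

section Tail

variable {Ω : Type*} [MeasurableSpace Ω] {P : Measure Ω} {φ ψ : ℝ → ℝ} {X : Ω → ℝ}

theorem phiMGF_tauPhi (hφ : Continuous φ) (hX : ∃ a, PhiMGF φ P X a)
    (hτ : 0 < tauPhi φ P X) : PhiMGF φ P X (tauPhi φ P X) := by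
  obtain ⟨a, ha⟩ := hX
  refine ⟨hτ, fun t => ⟨(ha.2 t).1, ?_⟩⟩
  have hclosed : IsClosed {b : ℝ | ∫ ω, exp (t * X ω) ∂P ≤ exp (φ (b * t))} :=
    isClosed_le continuous_const (by fun_prop)
  exact hclosed.closure_subset_iff.2 (fun b hb => (hb.2 t).2)
    (csInf_mem_closure ⟨a, ha⟩ ⟨0, fun b hb => hb.1.le⟩)

theorem measureReal_ge_le_exp [IsFiniteMeasure P] {τ : ℝ} (hX : PhiMGF φ P X τ) (ε : ℝ)
    {y : ℝ} (hy : 0 ≤ y) : P.real {ω | ε ≤ X ω} ≤ exp (-(ε / τ * y - φ y)) := by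
  have hτ := hX.1
  have ht : 0 ≤ y / τ := div_nonneg hy hτ.le
  calc P.real {ω | ε ≤ X ω} ≤ exp (-(y / τ) * ε) * ProbabilityTheory.mgf X P (y / τ) :=
        ProbabilityTheory.measure_ge_le_exp_mul_mgf ε ht (hX.2 _).1
    _ ≤ exp (-(y / τ) * ε) * exp (φ (τ * (y / τ))) := by gcongr; exact (hX.2 _).2
    _ = exp (-(ε / τ * y - φ y)) := by
        rw [mul_div_cancel₀ y hτ.ne', ← exp_add]
        ring_nf

theorem measureReal_ge_le_exp_neg_psi [IsProbabilityMeasure P] (hφ : ∀ x, 0 ≤ φ x)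
    (hψ : IsYoungFenchel φ ψ) {τ ε : ℝ} (hX : PhiMGF φ P X τ) (hε : 0 ≤ ε) :
    P.real {ω | ε ≤ X ω} ≤ exp (-ψ (ε / τ)) := by
  rcases measureReal_nonneg.eq_or_lt with hr | hr
  · rw [← hr]
    positivity
  rw [← log_le_iff_le_exp hr, le_neg]
  refine (hψ (ε / τ)).2 ?_
  rintro _ ⟨y, rfl⟩
  rw [le_neg, log_le_iff_le_exp hr]
  rcases le_or_gt 0 y with hy | hy
  · exact measureReal_ge_le_exp hX ε hy
  · have : ε / τ * y ≤ 0 := mul_nonpos_of_nonneg_of_nonpos (div_nonneg hε hX.1.le) hy.le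
    exact measureReal_le_one.trans (one_le_exp (by linarith [hφ y]))

theorem measure_ge_mul_le_rpow [IsProbabilityMeasure P] (hφ : IsOrliczN φ)
    (hψ : IsYoungFenchel φ ψ) (hX : IsPhiSubGaussian φ P X) (hτ : 0 < tauPhi φ P X)
    {r b s c : ℝ} (hr : 0 < r) (hs : 0 ≤ s) (hψs : ψ s = log r) (hc : 1 ≤ c)
    (hcb : c ≤ b / tauPhi φ P X) :
    P {ω | b * s ≤ X ω} ≤ ENNReal.ofReal (r ^ (-c)) := by
  set τ := tauPhi φ P X
  have hb : 0 < b := (div_pos_iff_of_pos_right hτ).1 (by linarith)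
  have hexponent : c * log r ≤ ψ (b * s / τ) := calc
    c * log r = c * ψ s := by rw [hψs]
    _ ≤ ψ (c * s) := hψ.mul_le_apply_mul hφ.nonneg hc s
    _ ≤ ψ (b / τ * s) :=
        hψ.monotoneOn hφ (mem_Ici.2 (mul_nonneg (by linarith) hs)) (mem_Ici.2 (by positivity))
        (by gcongr)
    _ = ψ (b * s / τ) := by rw [div_mul_eq_mul_div, mul_div_right_comm]
  rw [← ofReal_measureReal, rpow_def_of_pos hr]
  gcongr
  refine (measureReal_ge_le_exp_neg_psi hφ.nonneg hψ (phiMGF_tauPhi hφ.continuous hX.2.2 hτ)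
    (by positivity)).trans ?_
  gcongr
  linarith

end Tail

section RunningMax

variable {Ω : Type*} (X : ℕ → ℕ → Ω → ℝ) {m j : ℕ}

theorem exists_runMax_eq (hm : 1 ≤ m) (hj : 1 ≤ j) (ω : Ω) :
    ∃ k n, 1 ≤ k ∧ k ≤ m ∧ 1 ≤ n ∧ n ≤ j ∧ runMax X m j ω = X k n ω := by
  set S := {y | ∃ k n, 1 ≤ k ∧ k ≤ m ∧ 1 ≤ n ∧ n ≤ j ∧ y = X k n ω}
  have hfin : S.Finite := by
    refine (((finite_Icc 1 m).prod (finite_Icc 1 j)).image fun p => X p.1 p.2 ω).subset ?_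
    rintro _ ⟨k, n, hk1, hkm, hn1, hnj, rfl⟩
    exact mem_image_of_mem (fun p : ℕ × ℕ => X p.1 p.2 ω)
      (mk_mem_prod (mem_Icc.2 ⟨hk1, hkm⟩) (mem_Icc.2 ⟨hn1, hnj⟩))
  have hne : S.Nonempty := ⟨X 1 1 ω, 1, 1, le_rfl, hm, le_rfl, hj, rfl⟩
  exact hne.csSup_mem hfin

theorem measure_lt_runMax_le_sum [MeasurableSpace Ω] (P : Measure Ω) (hm : 1 ≤ m) (hj : 1 ≤ j)
    (a : ℝ) :
    P {ω | a < runMax X m j ω} ≤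
      ∑ k ∈ Finset.Icc 1 m, ∑ n ∈ Finset.Icc 1 j, P {ω | a ≤ X k n ω} := by
  calc P {ω | a < runMax X m j ω}
      ≤ P (⋃ k ∈ Finset.Icc 1 m, ⋃ n ∈ Finset.Icc 1 j, {ω | a ≤ X k n ω}) := by
        refine measure_mono fun ω hω => ?_
        obtain ⟨k, n, hk1, hkm, hn1, hnj, hmax⟩ := exists_runMax_eq X hm hj ω
        simp only [mem_iUnion, Finset.mem_Icc]
        exact ⟨k, ⟨hk1, hkm⟩, n, ⟨hn1, hnj⟩, (hmax ▸ hω : a < X k n ω).le⟩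
    _ ≤ _ := (measure_biUnion_finset_le _ _).trans
        (Finset.sum_le_sum fun _ _ => measure_biUnion_finset_le _ _)

theorem rpow_mul_measure_lt_runMax_le [MeasurableSpace Ω] {P : Measure Ω}
    [IsProbabilityMeasure P] {φ ψ : ℝ → ℝ} (hφ : IsOrliczN φ) (hψ : IsYoungFenchel φ ψ)
    (hsub : ∀ k n : ℕ, 1 ≤ k → 1 ≤ n → IsPhiSubGaussian φ P (X k n))
    (hτ : ∀ k n : ℕ, 1 ≤ k → 1 ≤ n → 0 < tauPhi φ P (X k n))
    (hm : 1 ≤ m) (hj : 1 ≤ j) {f : ℝ → ℝ} (α : ℝ) {b s : ℝ} (hs : 0 ≤ s)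
    (hψs : ψ s = log ((m * j : ℕ) : ℝ))
    (hf : ∀ k n : ℕ, 1 ≤ k → k ≤ m → 1 ≤ n → n ≤ j →
      1 ≤ f (((m * j : ℕ) : ℝ) / ((k * n : ℕ) : ℝ)) ∧
      f (((m * j : ℕ) : ℝ) / ((k * n : ℕ) : ℝ)) ≤ b / tauPhi φ P (X k n)) :
    ENNReal.ofReal (((m * j : ℕ) : ℝ) ^ (-α)) * P {ω | b * s < runMax X m j ω} ≤
      ∑ k ∈ Finset.Icc 1 m, ∑ n ∈ Finset.Icc 1 j,
        ENNReal.ofReal (((m * j : ℕ) : ℝ) ^ (-α - f (((m * j : ℕ) : ℝ) / ((k * n : ℕ) : ℝ)))) := by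
  have hr : (0 : ℝ) < ((m * j : ℕ) : ℝ) := by exact_mod_cast Nat.mul_pos hm hj
  grw [measure_lt_runMax_le_sum X P hm hj]
  simp only [Finset.mul_sum]
  gcongr with k hk n hn
  obtain ⟨hk1, hkm⟩ := Finset.mem_Icc.1 hk
  obtain ⟨hn1, hnj⟩ := Finset.mem_Icc.1 hn
  obtain ⟨hf1, hfb⟩ := hf k n hk1 hkm hn1 hnj
  rw [sub_eq_add_neg, rpow_add hr, ENNReal.ofReal_mul (by positivity)]
  gcongr
  exact measure_ge_mul_le_rpow hφ hψ (hsub k n hk1 hn1) (hτ k n hk1 hn1) hr hs hψs hf1 hfb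

end RunningMax

theorem sum_prob_pos_part_lt_top_general
    {Ω : Type*} [MeasurableSpace Ω] (P : Measure Ω) [IsProbabilityMeasure P]
    (φ ψ ψinv g : ℝ → ℝ) (hφ : IsOrliczN φ) (hψ : IsYoungFenchel φ ψ)
    (hψinv : ∀ x, 0 ≤ x → 0 ≤ ψinv x ∧ ψ (ψinv x) = x)
    (X : ℕ → ℕ → Ω → ℝ)
    (hsub : ∀ k n : ℕ, 1 ≤ k → 1 ≤ n → IsPhiSubGaussian φ P (X k n))
    (hτpos : ∀ k n : ℕ, 1 ≤ k → 1 ≤ n → 0 < tauPhi φ P (X k n))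
    (f : ℝ → ℝ) (α : ℝ)
    (hf : ∀ m j k n : ℕ, 1 ≤ k → k ≤ m → 1 ≤ n → n ≤ j →
      1 ≤ f (((m * j : ℕ) : ℝ) / ((k * n : ℕ) : ℝ)) ∧
      f (((m * j : ℕ) : ℝ) / ((k * n : ℕ) : ℝ))
        ≤ g (Real.log ((m * j : ℕ) : ℝ)) / tauPhi φ P (X k n))
    (hsum : (∑' m : ℕ, ∑' j : ℕ, ∑ k ∈ Finset.Icc 1 (m + 1), ∑ n ∈ Finset.Icc 1 (j + 1),
      ENNReal.ofReal (((((m + 1) * (j + 1) : ℕ)) : ℝ) ^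
        (-α - f (((((m + 1) * (j + 1) : ℕ)) : ℝ) / ((k * n : ℕ) : ℝ))))) < ⊤) :
    (∑' m : ℕ, ∑' j : ℕ,
      ENNReal.ofReal (((((m + 1) * (j + 1) : ℕ)) : ℝ) ^ (-α)) *
        P {ω | 0 < max (runMax X (m + 1) (j + 1) ω
          - g (Real.log ((((m + 1) * (j + 1) : ℕ)) : ℝ))
            * ψinv (Real.log ((((m + 1) * (j + 1) : ℕ)) : ℝ))) 0}) < ⊤ := by
  refine lt_of_le_of_lt (ENNReal.tsum_le_tsum fun m => ENNReal.tsum_le_tsum fun j => ?_) hsum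
  obtain ⟨hs, hψs⟩ := hψinv _ (Real.log_natCast_nonneg ((m + 1) * (j + 1)))
  simp only [lt_max_iff, lt_irrefl, or_false, sub_pos]
  exact rpow_mul_measure_lt_runMax_le X hφ hψ hsub hτpos m.succ_pos j.succ_pos α hs hψs
    (hf (m + 1) (j + 1))

/-- Theorem 4: if `g(ln(mj))/τ_φ(X_{k,n}) ≥ f(mj/(kn)) ≥ 1` and the
quadruple series `Σ_{m,j} Σ_{k≤m,n≤j} (mj)^{-α-f(mj/(kn))}` converges, then
`Σ_{m,j} (mj)^{-α} P(Y⁺_{m,j} > 0) < ∞`, where `a_{m,j} = g(ln(mj)) ψ⁻¹(ln(mj))`. -/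
theorem sum_prob_pos_part_lt_top
    {Ω : Type*} [MeasurableSpace Ω] (P : Measure Ω) [IsProbabilityMeasure P]
    (φ ψ ψinv g : ℝ → ℝ) (hφ : IsOrliczN φ) (hψ : IsYoungFenchel φ ψ)
    (hψinv : ∀ x, 0 ≤ x → 0 ≤ ψinv x ∧ ψ (ψinv x) = x)
    (hg_mono : MonotoneOn g (Set.Ici 0)) (hg_pos : ∀ x, 0 ≤ x → 0 < g x)
    (X : ℕ → ℕ → Ω → ℝ)
    (hsub : ∀ k n : ℕ, 1 ≤ k → 1 ≤ n → IsPhiSubGaussian φ P (X k n))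
    (hτpos : ∀ k n : ℕ, 1 ≤ k → 1 ≤ n → 0 < tauPhi φ P (X k n))
    (f : ℝ → ℝ) (α : ℝ)
    (hf : ∀ m j k n : ℕ, 1 ≤ k → k ≤ m → 1 ≤ n → n ≤ j →
      1 ≤ f (((m * j : ℕ) : ℝ) / ((k * n : ℕ) : ℝ)) ∧
      f (((m * j : ℕ) : ℝ) / ((k * n : ℕ) : ℝ))
        ≤ g (Real.log ((m * j : ℕ) : ℝ)) / tauPhi φ P (X k n))
    (hsum : (∑' m : ℕ, ∑' j : ℕ, ∑ k ∈ Finset.Icc 1 (m + 1), ∑ n ∈ Finset.Icc 1 (j + 1),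
      ENNReal.ofReal (((((m + 1) * (j + 1) : ℕ)) : ℝ) ^
        (-α - f (((((m + 1) * (j + 1) : ℕ)) : ℝ) / ((k * n : ℕ) : ℝ))))) < ⊤) :
    (∑' m : ℕ, ∑' j : ℕ,
      ENNReal.ofReal (((((m + 1) * (j + 1) : ℕ)) : ℝ) ^ (-α)) *
        P {ω | 0 < max (runMax X (m + 1) (j + 1) ω
          - g (Real.log ((((m + 1) * (j + 1) : ℕ)) : ℝ))
            * ψinv (Real.log ((((m + 1) * (j + 1) : ℕ)) : ℝ))) 0}) < ⊤ :=
  sum_prob_pos_part_lt_top_general P φ ψ ψinv g hφ hψ hψinv X hsub hτpos f α hf hsum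
end

section
/- Let {X_{k,n} : k,n ≥ 1} be a double array of independent φ-subgaussian random variables with τ_φ(X_{k,n}) = 1 for all k,n, and let a_{m,j} = ψ^{−1}(ln(mj)). Assume: (i) there exists a strictly increasing function κ : (0,∞) → (0,∞) and a constant C > 0 such that P(X_{k,n} > x) ≥ C exp(−κ(x)) for all k,n ≥ 1 and x > 0; (ii) there exist x₀ > 0 and constants B, C₁ > 0 such that exp(−κ(x)) ≥ C₁ exp(−B ψ(x)) for all x ≥ x₀; (iii) for some ε > 0 there is C₂ < +∞ with sup_{x > x₀} q_φ(x + ε)/ψ(x) ≤ C₂. Then for every α < 2 − B(1 + C₂ ε) it holds that Σ_{m=1}^∞ Σ_{j=1}^∞ (mj)^{−α} P(Y⁺_{m,j} > ε) = +∞. -/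
open MeasureTheory Real Filter Set

/-! Only the first row `m = 1` of the double series is needed. Since `τ_φ(X_{1,1}) = 1`, the
Chernoff bound together with (i) gives `ψ x ≤ κ x - log C`; combined with (ii) this reads
`ψ ≤ B ψ + const` for large arguments, which forces `B ≥ 1` because `ψ` is unbounded. With
`a_J = ψ⁻¹(log J)`, condition (iii) gives `ψ(a_J + ε) ≤ (1 + C₂ ε) log J`, so by (i) and (ii) each
`X_{1,n}` exceeds `a_J + ε` with probability at least `c J^{-β}`, where `c = min (C C₁) 1` and
`β = B (1 + C₂ ε) ≥ 1`.
By independence the maximum over `n ≤ J` exceeds it with probability at least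
`(1 - e⁻¹) c J^{1-β}`, so the `J`-th term of the first row is at least a constant times
`J^{1-β-α} ≥ J⁻¹`, and the harmonic series diverges. -/

lemma intervalIntegrable_of_monotoneOn_Ici {q : ℝ → ℝ} (hq : MonotoneOn q (Ici 0))
    {u v : ℝ} (hu : 0 ≤ u) (hv : 0 ≤ v) : IntervalIntegrable q volume u v :=
  (hq.mono fun _ ht => le_trans (le_min hu hv) ht.1).intervalIntegrable

lemma eq_add_integral_of_eq_integral {q ψ : ℝ → ℝ} (hq : MonotoneOn q (Ici 0))
    (hψq : ∀ x, 0 ≤ x → ψ x = ∫ t in (0:ℝ)..x, q t) {u v : ℝ} (hu : 0 ≤ u) (hv : 0 ≤ v) :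
    ψ v = ψ u + ∫ t in u..v, q t := by
  rw [hψq u hu, hψq v hv, intervalIntegral.integral_add_adjacent_intervals
    (intervalIntegrable_of_monotoneOn_Ici hq le_rfl hu)
    (intervalIntegrable_of_monotoneOn_Ici hq hu hv)]

lemma monotoneOn_of_eq_integral {q ψ : ℝ → ℝ} (hq : MonotoneOn q (Ici 0))
    (hq_nonneg : ∀ x, 0 ≤ x → 0 ≤ q x) (hψq : ∀ x, 0 ≤ x → ψ x = ∫ t in (0:ℝ)..x, q t) :
    MonotoneOn ψ (Ici 0) := by
  intro u hu v hv huv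
  rw [eq_add_integral_of_eq_integral hq hψq hu hv, le_add_iff_nonneg_right]
  exact intervalIntegral.integral_nonneg huv fun t ht => hq_nonneg t (hu.trans ht.1)

lemma le_add_sub_mul_of_eq_integral {q ψ : ℝ → ℝ} (hq : MonotoneOn q (Ici 0))
    (hψq : ∀ x, 0 ≤ x → ψ x = ∫ t in (0:ℝ)..x, q t) {u v : ℝ} (hu : 0 ≤ u) (huv : u ≤ v) :
    ψ v ≤ ψ u + (v - u) * q v := by
  have hv := hu.trans huv
  have hint : ∫ t in u..v, q t ≤ ∫ _ in u..v, q v :=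
    intervalIntegral.integral_mono_on huv (intervalIntegrable_of_monotoneOn_Ici hq hu hv)
      intervalIntegrable_const fun t ht => hq (hu.trans ht.1) hv ht.2
  rw [intervalIntegral.integral_const, smul_eq_mul] at hint
  rw [eq_add_integral_of_eq_integral hq hψq hu hv]
  linarith

lemma le_one_add_mul_of_eq_integral {q ψ : ℝ → ℝ} (hq : MonotoneOn q (Ici 0))
    (hψq : ∀ x, 0 ≤ x → ψ x = ∫ t in (0:ℝ)..x, q t) {a ε K : ℝ} (ha : 0 ≤ a) (hε : 0 ≤ ε)
    (hqa : q (a + ε) ≤ K * ψ a) : ψ (a + ε) ≤ (1 + K * ε) * ψ a := by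
  have h := le_add_sub_mul_of_eq_integral hq hψq ha (le_add_of_nonneg_right hε)
  rw [add_sub_cancel_left] at h
  nlinarith

lemma MonotoneOn.tendsto_atTop_of_rightInv {ψ ψinv : ℝ → ℝ} (hψ : MonotoneOn ψ (Ici 0))
    (hinv : ∀ x, 0 ≤ x → 0 ≤ ψinv x ∧ ψ (ψinv x) = x) : Tendsto ψ atTop atTop := by
  refine tendsto_atTop_atTop.2 fun b => ⟨ψinv (max b 0), fun x hx => ?_⟩
  obtain ⟨h0, hb⟩ := hinv (max b 0) (le_max_right b 0)
  calc b ≤ max b 0 := le_max_left b 0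
    _ = ψ (ψinv (max b 0)) := hb.symm
    _ ≤ ψ x := hψ h0 (h0.trans hx) hx

lemma MonotoneOn.tendsto_rightInv_atTop {ψ ψinv : ℝ → ℝ} (hψ : MonotoneOn ψ (Ici 0))
    (hinv : ∀ x, 0 ≤ x → 0 ≤ ψinv x ∧ ψ (ψinv x) = x) : Tendsto ψinv atTop atTop := by
  refine tendsto_atTop_atTop.2 fun M => ⟨max (ψ (max M 0)) 0 + 1, fun t ht => ?_⟩
  have ht0 : 0 ≤ t := by linarith [le_max_right (ψ (max M 0)) 0]
  obtain ⟨h0, hψt⟩ := hinv t ht0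
  by_contra! hlt
  have hle := hψ h0 (le_max_right M 0) (hlt.le.trans (le_max_left M 0))
  linarith [le_max_left (ψ (max M 0)) 0]

section PhiMGF

variable {φ : ℝ → ℝ} {Ω : Type*} [MeasurableSpace Ω] {P : Measure Ω} {X : Ω → ℝ}

lemma apply_abs_of_even (heven : ∀ x, φ (-x) = φ x) (x : ℝ) : φ |x| = φ x := by
  rcases abs_choice x with hx | hx <;> rw [hx]
  exact heven x

lemma PhiMGF.mono (heven : ∀ x, φ (-x) = φ x) (hmono : MonotoneOn φ (Ici 0)) {a a' : ℝ}
    (h : PhiMGF φ P X a) (haa' : a ≤ a') : PhiMGF φ P X a' := by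
  have ha' : 0 < a' := h.1.trans_le haa'
  refine ⟨ha', fun t => ⟨(h.2 t).1, (h.2 t).2.trans (exp_le_exp.2 ?_)⟩⟩
  rw [← apply_abs_of_even heven (a * t), ← apply_abs_of_even heven (a' * t), abs_mul, abs_mul,
    abs_of_pos h.1, abs_of_pos ha']
  exact hmono (mem_Ici.2 (mul_nonneg h.1.le (abs_nonneg t)))
    (mem_Ici.2 (mul_nonneg ha'.le (abs_nonneg t))) (mul_le_mul_of_nonneg_right haa' (abs_nonneg t))

lemma phiMGF_of_tauPhi_lt (heven : ∀ x, φ (-x) = φ x) (hmono : MonotoneOn φ (Ici 0))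
    (hne : ∃ a, PhiMGF φ P X a) {a' : ℝ} (h : tauPhi φ P X < a') : PhiMGF φ P X a' := by
  obtain ⟨a, ha, haa'⟩ := (csInf_lt_iff ⟨0, fun a ha => ha.1.le⟩ hne).1 h
  exact PhiMGF.mono heven hmono ha haa'.le

lemma PhiMGF.measureReal_lt_le [IsFiniteMeasure P] {a : ℝ} (h : PhiMGF φ P X a) (x : ℝ)
    {t : ℝ} (ht : 0 ≤ t) : P.real {ω | x < X ω} ≤ exp (φ (a * t) - t * x) := by
  obtain ⟨hint, hmgf⟩ := h.2 t
  calc P.real {ω | x < X ω} ≤ P.real {ω | x ≤ X ω} :=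
        measureReal_mono fun ω (hω : x < X ω) => hω.le
    _ ≤ exp (-t * x) * ProbabilityTheory.mgf X P t :=
        ProbabilityTheory.measure_ge_le_exp_mul_mgf x ht hint
    _ ≤ exp (-t * x) * exp (φ (a * t)) := by gcongr; exact hmgf
    _ = exp (φ (a * t) - t * x) := by rw [← exp_add]; ring_nf

lemma PhiMGF.le_neg_log_of_le_measure [IsFiniteMeasure P] {ψ : ℝ → ℝ}
    (heven : ∀ x, φ (-x) = φ x) (hψ : IsYoungFenchel φ ψ) {a : ℝ} (h : PhiMGF φ P X a)
    {x p : ℝ} (hx : 0 ≤ x) (hp : 0 < p) (htail : ENNReal.ofReal p ≤ P {ω | x < X ω}) :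
    ψ (x / a) ≤ -log p := by
  refine (hψ (x / a)).2 ?_
  rintro _ ⟨y, rfl⟩
  have hp_le : p ≤ P.real {ω | x < X ω} :=
    (ENNReal.ofReal_le_iff_le_toReal (measure_ne_top _ _)).1 htail
  have hchernoff := hp_le.trans (h.measureReal_lt_le x (div_nonneg (abs_nonneg y) h.1.le))
  rw [mul_div_cancel₀ _ h.1.ne', ← log_le_iff_le_exp hp] at hchernoff
  have hy : x / a * y ≤ x / a * |y| :=
    mul_le_mul_of_nonneg_left (le_abs_self y) (div_nonneg hx h.1.le)
  rw [← apply_abs_of_even heven y]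
  linarith [show |y| / a * x = x / a * |y| by ring]

open Topology in
lemma le_neg_log_of_le_measure_of_tauPhi_le_one [IsFiniteMeasure P] {ψ q : ℝ → ℝ}
    (heven : ∀ x, φ (-x) = φ x) (hmono : MonotoneOn φ (Ici 0)) (hψ : IsYoungFenchel φ ψ)
    (hq : MonotoneOn q (Ici 0))
    (hψq : ∀ x, 0 ≤ x → ψ x = ∫ t in (0:ℝ)..x, q t) (hne : ∃ a, PhiMGF φ P X a)
    (hτ : tauPhi φ P X ≤ 1) {x p : ℝ} (hx : 0 < x) (hp : 0 < p)
    (htail : ENNReal.ofReal p ≤ P {ω | x < X ω}) : ψ x ≤ -log p := by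
  -- Every `a > 1` is an admissible MGF constant, which bounds `ψ` on `(0, x)`; then let `u → x⁻`.
  have hbelow : ∀ u ∈ Ioo 0 x, ψ x ≤ -log p + (x - u) * q x := fun u hu => by
    have hMGF : PhiMGF φ P X (x / u) := phiMGF_of_tauPhi_lt heven hmono hne
      (hτ.trans_lt ((one_lt_div hu.1).2 hu.2))
    have hu_le := hMGF.le_neg_log_of_le_measure heven hψ hx.le hp htail
    rw [div_div_cancel₀ hx.ne'] at hu_le
    linarith [le_add_sub_mul_of_eq_integral hq hψq hu.1.le hu.2.le]
  have hlim : Tendsto (fun u => -log p + (x - u) * q x) (𝓝[<] x) (𝓝 (-log p)) := by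
    have hcont : Continuous fun u => -log p + (x - u) * q x := by fun_prop
    simpa using (hcont.tendsto x).mono_left nhdsWithin_le_nhds
  exact ge_of_tendsto hlim (eventually_of_mem (Ioo_mem_nhdsLT hx) hbelow)

end PhiMGF

lemma one_le_of_tendsto_atTop_of_eventually_le_mul_add {α : Type*} {l : Filter α} [l.NeBot]
    {f : α → ℝ} (hf : Tendsto f l atTop) {B D : ℝ} (h : ∀ᶠ x in l, f x ≤ B * f x + D) :
    1 ≤ B := by
  by_contra! hB
  obtain ⟨x, hx, hxD⟩ := ((hf.eventually_gt_atTop (D / (1 - B))).and h).exists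
  rw [div_lt_iff₀ (by linarith)] at hx
  nlinarith

lemma lt_runMax_iff {Ω : Type*} (X : ℕ → ℕ → Ω → ℝ) {m j : ℕ} (hm : 1 ≤ m) (hj : 1 ≤ j)
    (ω : Ω) (c : ℝ) :
    c < runMax X m j ω ↔ ∃ p ∈ Finset.Icc 1 m ×ˢ Finset.Icc 1 j, c < X p.1 p.2 ω := by
  set F := Finset.Icc 1 m ×ˢ Finset.Icc 1 j
  have hset : {y | ∃ k n, 1 ≤ k ∧ k ≤ m ∧ 1 ≤ n ∧ n ≤ j ∧ y = X k n ω} =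
      (fun p : ℕ × ℕ => X p.1 p.2 ω) '' F := by
    ext y
    simp only [F, Finset.coe_product, Finset.coe_Icc, mem_image, mem_prod, mem_Icc, Prod.exists]
    grind
  have hne : (F : Set (ℕ × ℕ)).Nonempty := ⟨(1, 1), by simp [F, hm, hj]⟩
  rw [runMax, hset, lt_csSup_iff (F.finite_toSet.image _).bddAbove (hne.image _)]
  simp

lemma ProbabilityTheory.iIndepFun.one_sub_pow_le_measureReal_exists_lt {ι Ω : Type*}
    [MeasurableSpace Ω] {P : Measure Ω} [IsProbabilityMeasure P] {Y : ι → Ω → ℝ}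
    (hY : ProbabilityTheory.iIndepFun Y P) (F : Finset ι) (hmeas : ∀ i ∈ F, AEMeasurable (Y i) P)
    {c r : ℝ} (hr : ∀ i ∈ F, r ≤ P.real {ω | c < Y i ω}) :
    1 - (1 - r) ^ F.card ≤ P.real {ω | ∃ i ∈ F, c < Y i ω} := by
  have hnull : ∀ i ∈ F, NullMeasurableSet {ω | c < Y i ω} P := fun i hi =>
    (hmeas i hi).nullMeasurable measurableSet_Ioi
  have hcompl : {ω | ∃ i ∈ F, c < Y i ω}ᶜ = ⋂ i ∈ F, Y i ⁻¹' Iic c := by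
    ext ω
    simp
  have hfactor : ∀ i ∈ F, P.real (Y i ⁻¹' Iic c) ≤ 1 - r := fun i hi => by
    have hc : Y i ⁻¹' Iic c = {ω | c < Y i ω}ᶜ := by
      ext ω
      simp
    rw [hc, probReal_compl_eq_one_sub₀ (hnull i hi)]
    linarith [hr i hi]
  have hall : P.real {ω | ∃ i ∈ F, c < Y i ω}ᶜ ≤ (1 - r) ^ F.card := by
    rw [hcompl, measureReal_def, hY.measure_inter_preimage_eq_mul F
      fun _ _ => measurableSet_Iic, ENNReal.toReal_prod, ← Finset.prod_const]
    exact Finset.prod_le_prod (fun _ _ => ENNReal.toReal_nonneg) hfactor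
  have hE : NullMeasurableSet {ω | ∃ i ∈ F, c < Y i ω} P := by
    have hunion : {ω | ∃ i ∈ F, c < Y i ω} = ⋃ i ∈ (F : Set ι), {ω | c < Y i ω} := by
      ext ω
      simp
    rw [hunion]
    exact .biUnion F.countable_toSet hnull
  rw [probReal_compl_eq_one_sub₀ hE] at hall
  linarith

lemma mul_le_one_sub_one_sub_pow {r : ℝ} (hr0 : 0 ≤ r) (hr1 : r ≤ 1) {n : ℕ}
    (hnr : n * r ≤ 1) : (1 - exp (-1)) * (n * r) ≤ 1 - (1 - r) ^ n := by
  have hpow : (1 - r) ^ n ≤ exp (-(n * r)) := by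
    calc (1 - r) ^ n ≤ exp (-r) ^ n :=
          pow_le_pow_left₀ (by linarith) (by linarith [add_one_le_exp (-r)]) n
      _ = exp (-(n * r)) := by rw [← exp_nat_mul]; ring_nf
  -- `(1 - e⁻¹) t ≤ 1 - e^{-t}` on `[0, 1]`, by convexity of `exp` between `-1` and `0`.
  have hconvex := convexOn_exp.2 (mem_univ 0) (mem_univ (-1)) (sub_nonneg.2 hnr)
    (by positivity) (sub_add_cancel 1 (n * r))
  simp only [smul_eq_mul, mul_zero, mul_neg, mul_one, zero_add, exp_zero] at hconvex
  linarith

lemma mul_le_measureReal_runMax {Ω : Type*} [MeasurableSpace Ω] {P : Measure Ω}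
    [IsProbabilityMeasure P] {X : ℕ → ℕ → Ω → ℝ}
    (hind : ProbabilityTheory.iIndepFun (fun p : ℕ × ℕ => X p.1 p.2) P)
    (hmeas : ∀ k n : ℕ, 1 ≤ k → 1 ≤ n → AEMeasurable (X k n) P) {a ε r : ℝ} (hε : 0 ≤ ε)
    (hr0 : 0 ≤ r) (hr : ∀ k n : ℕ, 1 ≤ k → 1 ≤ n → r ≤ P.real {ω | a + ε < X k n ω})
    {m j : ℕ} (hm : 1 ≤ m) (hj : 1 ≤ j) (hmjr : (m * j : ℕ) * r ≤ 1) :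
    (1 - exp (-1)) * ((m * j : ℕ) * r) ≤
      P.real {ω | ε < max (runMax X m j ω - a) 0} := by
  set F := Finset.Icc 1 m ×ˢ Finset.Icc 1 j
  have hevent : {ω | ε < max (runMax X m j ω - a) 0} =
      {ω | ∃ p ∈ F, a + ε < X p.1 p.2 ω} := by
    ext ω
    rw [mem_ofPred_eq, mem_ofPred_eq, ← lt_runMax_iff X hm hj, lt_max_iff]
    constructor
    · rintro (h | h) <;> linarith
    · intro h; left; linarith
  have hmemF : ∀ p ∈ F, 1 ≤ p.1 ∧ 1 ≤ p.2 := fun p hp => by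
    simp only [F, Finset.mem_product, Finset.mem_Icc] at hp
    exact ⟨hp.1.1, hp.2.1⟩
  have hcard : F.card = m * j := by simp [F]
  rw [hevent]
  calc (1 - exp (-1)) * ((m * j : ℕ) * r) ≤ 1 - (1 - r) ^ F.card := by
        rw [hcard]
        exact mul_le_one_sub_one_sub_pow hr0 ((hr 1 1 le_rfl le_rfl).trans measureReal_le_one)
          hmjr
    _ ≤ _ := hind.one_sub_pow_le_measureReal_exists_lt F
        (fun p hp => hmeas p.1 p.2 (hmemF p hp).1 (hmemF p hp).2)
        (fun p hp => hr p.1 p.2 (hmemF p hp).1 (hmemF p hp).2)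

lemma eventually_mul_rpow_neg_le_measureReal {Ω : Type*} [MeasurableSpace Ω] {P : Measure Ω}
    [IsFiniteMeasure P] {ψ ψinv q κ : ℝ → ℝ} (hq : MonotoneOn q (Ici 0))
    (hψq : ∀ x, 0 ≤ x → ψ x = ∫ t in (0:ℝ)..x, q t)
    (hψinv : ∀ x, 0 ≤ x → 0 ≤ ψinv x ∧ ψ (ψinv x) = x) (hψinv_top : Tendsto ψinv atTop atTop)
    {X : ℕ → ℕ → Ω → ℝ} {C : ℝ} (hC : 0 ≤ C)
    (htail : ∀ k n : ℕ, 1 ≤ k → 1 ≤ n → ∀ x : ℝ, 0 < x →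
      ENNReal.ofReal (C * exp (-κ x)) ≤ P {ω | x < X k n ω})
    {x₀ B C₁ : ℝ} (hB : 0 ≤ B) (hC₁ : 0 ≤ C₁)
    (hκψ : ∀ x : ℝ, x₀ ≤ x → C₁ * exp (-(B * ψ x)) ≤ exp (-κ x))
    {ε C₂ : ℝ} (hε : 0 < ε) (hC₂ : ∀ x : ℝ, x₀ < x → q (x + ε) / ψ x ≤ C₂) :
    ∀ᶠ J : ℕ in atTop, ∀ k n : ℕ, 1 ≤ k → 1 ≤ n →
      C * C₁ * (J : ℝ) ^ (-(B * (1 + C₂ * ε))) ≤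
        P.real {ω | ψinv (log J) + ε < X k n ω} := by
  have ha_top : Tendsto (fun J : ℕ => ψinv (log J)) atTop atTop :=
    hψinv_top.comp (tendsto_log_atTop.comp tendsto_natCast_atTop_atTop)
  filter_upwards [ha_top.eventually_gt_atTop x₀, eventually_gt_atTop 1] with J hx₀ hJ k n hk hn
  have hlogJ : 0 < log J := log_pos (by exact_mod_cast hJ)
  obtain ⟨ha0, hψa⟩ := hψinv _ hlogJ.le
  set a := ψinv (log J)
  have hqa : q (a + ε) ≤ C₂ * ψ a := by
    rw [← div_le_iff₀ (hψa ▸ hlogJ)]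
    exact hC₂ a hx₀
  have hψaε := le_one_add_mul_of_eq_integral hq hψq ha0 hε.le hqa
  rw [hψa] at hψaε
  have hpow : (J : ℝ) ^ (-(B * (1 + C₂ * ε))) ≤ exp (-(B * ψ (a + ε))) := by
    rw [rpow_def_of_pos (by positivity), exp_le_exp]
    nlinarith
  calc C * C₁ * (J : ℝ) ^ (-(B * (1 + C₂ * ε))) ≤ C * (C₁ * exp (-(B * ψ (a + ε)))) := by
        rw [mul_assoc]; gcongr
    _ ≤ C * exp (-κ (a + ε)) := by gcongr; exact hκψ _ (by linarith)
    _ ≤ P.real {ω | a + ε < X k n ω} :=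
        (ENNReal.ofReal_le_iff_le_toReal (measure_ne_top _ _)).1
          (htail k n hk hn _ (by linarith))

lemma inv_le_rpow_neg_mul_mul_rpow_neg {J α β : ℝ} (hJ : 1 ≤ J) (hαβ : α + β ≤ 2) :
    J⁻¹ ≤ J ^ (-α) * (J * J ^ (-β)) := by
  have hJ0 : 0 < J := zero_lt_one.trans_le hJ
  rw [← rpow_neg_one, mul_comm J, ← rpow_add_one hJ0.ne', ← rpow_add hJ0]
  exact rpow_le_rpow_of_exponent_le hJ (by linarith)

lemma eventually_ofReal_div_le_rpow_mul_measure_runMax {Ω : Type*} [MeasurableSpace Ω]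
    {P : Measure Ω} [IsProbabilityMeasure P] {X : ℕ → ℕ → Ω → ℝ}
    (hind : ProbabilityTheory.iIndepFun (fun p : ℕ × ℕ => X p.1 p.2) P)
    (hmeas : ∀ k n : ℕ, 1 ≤ k → 1 ≤ n → AEMeasurable (X k n) P) {a : ℕ → ℝ} {ε c α β : ℝ}
    (hε : 0 ≤ ε) (hc : 0 < c) (hβ : 1 ≤ β) (hαβ : α ≤ 2 - β)
    (hlevel : ∀ᶠ J : ℕ in atTop, ∀ k n : ℕ, 1 ≤ k → 1 ≤ n →
      c * (J : ℝ) ^ (-β) ≤ P.real {ω | a J + ε < X k n ω}) :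
    ∀ᶠ J : ℕ in atTop, ENNReal.ofReal ((1 - exp (-1)) * min c 1 / J) ≤
      ENNReal.ofReal ((J : ℝ) ^ (-α)) * P {ω | ε < max (runMax X 1 J ω - a J) 0} := by
  filter_upwards [hlevel, eventually_ge_atTop 1] with J hJ hJ1
  have hJ1' : (1 : ℝ) ≤ J := by exact_mod_cast hJ1
  have hJ0 : (0 : ℝ) < J := zero_lt_one.trans_le hJ1'
  set r := min c 1 * (J : ℝ) ^ (-β)
  have hJr : ((1 * J : ℕ) : ℝ) * r ≤ 1 := by
    have hpow : (J : ℝ) * (J : ℝ) ^ (-β) ≤ 1 := by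
      rw [mul_comm, ← rpow_add_one hJ0.ne']
      exact rpow_le_one_of_one_le_of_nonpos hJ1' (by linarith)
    calc ((1 * J : ℕ) : ℝ) * r = min c 1 * ((J : ℝ) * (J : ℝ) ^ (-β)) := by push_cast; ring
      _ ≤ 1 * 1 := mul_le_mul (min_le_right c 1) hpow (by positivity) zero_le_one
      _ = 1 := one_mul 1
  have hP := mul_le_measureReal_runMax hind hmeas hε (by positivity)
    (fun k n hk hn => (mul_le_mul_of_nonneg_right (min_le_left c 1) (by positivity)).trans
      (hJ k n hk hn)) le_rfl hJ1 hJr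
  rw [← ofReal_measureReal, ← ENNReal.ofReal_mul (by positivity)]
  refine ENNReal.ofReal_le_ofReal ?_
  have he : 0 ≤ 1 - exp (-1) := by linarith [exp_le_one_iff.2 (by norm_num : (-1 : ℝ) ≤ 0)]
  calc (1 - exp (-1)) * min c 1 / J = (1 - exp (-1)) * min c 1 * (J : ℝ)⁻¹ := div_eq_mul_inv _ _
    _ ≤ (1 - exp (-1)) * min c 1 * ((J : ℝ) ^ (-α) * (J * (J : ℝ) ^ (-β))) := by
        gcongr
        exact inv_le_rpow_neg_mul_mul_rpow_neg hJ1' (by linarith)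
    _ = (J : ℝ) ^ (-α) * ((1 - exp (-1)) * (((1 * J : ℕ) : ℝ) * r)) := by push_cast; ring
    _ ≤ (J : ℝ) ^ (-α) * P.real {ω | ε < max (runMax X 1 J ω - a J) 0} := by gcongr

lemma tsum_eq_top_of_eventually_ofReal_div_le {f : ℕ → ENNReal} {c : ℝ} (hc : 0 < c)
    (h : ∀ᶠ n in atTop, ENNReal.ofReal (c / (n + 1 : ℕ)) ≤ f n) : ∑' n, f n = ⊤ := by
  by_contra hfin
  have hbound : ∀ᶠ n in atTop, ‖1 / ((n + 1 : ℕ) : ℝ)‖ ≤ c⁻¹ * (f n).toReal := by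
    filter_upwards [h] with n hn
    rw [ENNReal.ofReal_le_iff_le_toReal (ENNReal.ne_top_of_tsum_ne_top hfin n)] at hn
    rw [Real.norm_of_nonneg (by positivity), le_inv_mul_iff₀ hc]
    simpa [div_eq_mul_inv] using hn
  exact Real.not_summable_one_div_natCast ((summable_nat_add_iff 1).1
    (((ENNReal.summable_toReal hfin).mul_left c⁻¹).of_norm_bounded_eventually_nat hbound))

theorem sum_prob_pos_part_eq_top_general
    {Ω : Type*} [MeasurableSpace Ω] (P : Measure Ω) [IsProbabilityMeasure P]
    (φ ψ ψinv q : ℝ → ℝ) (hφ : IsOrliczN φ) (hψ : IsYoungFenchel φ ψ)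
    (hq_mono : MonotoneOn q (Set.Ici 0)) (hq_nonneg : ∀ x, 0 ≤ x → 0 ≤ q x)
    (hψq : ∀ x, 0 ≤ x → ψ x = ∫ t in (0:ℝ)..x, q t)
    (hψinv : ∀ x, 0 ≤ x → 0 ≤ ψinv x ∧ ψ (ψinv x) = x)
    (X : ℕ → ℕ → Ω → ℝ)
    (hsub : ∀ k n : ℕ, 1 ≤ k → 1 ≤ n → IsPhiSubGaussian φ P (X k n))
    (hτ : ∀ k n : ℕ, 1 ≤ k → 1 ≤ n → tauPhi φ P (X k n) = 1)
    (hindep : ProbabilityTheory.iIndepFun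
      (fun p : ℕ × ℕ => X p.1 p.2) P)
    -- (i) lower bound on the right tail:
    (κ : ℝ → ℝ)
    (C : ℝ) (hC : 0 < C)
    (htail : ∀ k n : ℕ, 1 ≤ k → 1 ≤ n → ∀ x : ℝ, 0 < x →
      ENNReal.ofReal (C * Real.exp (-κ x)) ≤ P {ω | x < X k n ω})
    -- (ii) comparison of `κ` and `ψ`:
    (x₀ B C₁ : ℝ) (hC₁ : 0 < C₁)
    (hκψ : ∀ x : ℝ, x₀ ≤ x → C₁ * Real.exp (-(B * ψ x)) ≤ Real.exp (-κ x))
    -- (iii) growth bound on `q_φ`: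
    (ε C₂ : ℝ) (hε : 0 < ε) (hC₂ : ∀ x : ℝ, x₀ < x → q (x + ε) / ψ x ≤ C₂) :
    ∀ α : ℝ, α < 2 - B * (1 + C₂ * ε) →
    (∑' m : ℕ, ∑' j : ℕ,
      ENNReal.ofReal (((((m + 1) * (j + 1) : ℕ)) : ℝ) ^ (-α)) *
        P {ω | ε < max (runMax X (m + 1) (j + 1) ω
          - ψinv (Real.log ((((m + 1) * (j + 1) : ℕ)) : ℝ))) 0}) = ⊤ := by
  intro α hα
  have hψ_mono := monotoneOn_of_eq_integral hq_mono hq_nonneg hψq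
  have hψκ : ∀ x, 0 < x → ψ x ≤ κ x - log C := fun x hx => by
    have h := le_neg_log_of_le_measure_of_tauPhi_le_one hφ.even hφ.strictMonoOn.monotoneOn hψ
      hq_mono hψq (hsub 1 1 le_rfl le_rfl).2.2 (hτ 1 1 le_rfl le_rfl).le hx (by positivity)
      (htail 1 1 le_rfl le_rfl x hx)
    rwa [log_mul hC.ne' (exp_pos _).ne', log_exp, neg_add, neg_neg, add_comm,
      ← sub_eq_add_neg] at h
  have hB : 1 ≤ B := by
    refine one_le_of_tendsto_atTop_of_eventually_le_mul_add (D := -log C - log C₁)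
      (hψ_mono.tendsto_atTop_of_rightInv hψinv) ?_
    filter_upwards [eventually_ge_atTop x₀, eventually_gt_atTop 0] with x hx hx0
    have h := log_le_log (by positivity) (hκψ x hx)
    rw [log_mul hC₁.ne' (exp_pos _).ne', log_exp, log_exp] at h
    linarith [hψκ x hx0]
  have hC₂_nonneg : 0 ≤ C₂ := by
    obtain ⟨x, hx, hx0⟩ := ((eventually_gt_atTop x₀).and (eventually_ge_atTop 0)).exists
    refine (div_nonneg (hq_nonneg _ (by linarith)) ?_).trans (hC₂ x hx)
    exact hψq x hx0 ▸ intervalIntegral.integral_nonneg hx0 fun t ht => hq_nonneg t ht.1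
  have hrow := eventually_ofReal_div_le_rpow_mul_measure_runMax hindep
    (fun k n hk hn => (hsub k n hk hn).1.aemeasurable) hε.le (by positivity)
    (by nlinarith [mul_nonneg hC₂_nonneg hε.le]) hα.le
    (eventually_mul_rpow_neg_le_measureReal hq_mono hψq hψinv
      (hψ_mono.tendsto_rightInv_atTop hψinv) hC.le htail (zero_le_one.trans hB) hC₁.le hκψ hε
      hC₂)
  have hpos : 0 < (1 - exp (-1)) * min (C * C₁) 1 :=
    mul_pos (sub_pos.2 (exp_lt_one_iff.2 (by norm_num))) (lt_min (by positivity) one_pos)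
  refine top_le_iff.1 ((tsum_eq_top_of_eventually_ofReal_div_le hpos ?_).symm.le.trans
    (ENNReal.le_tsum 0))
  simpa using (tendsto_add_atTop_nat 1).eventually hrow

/-- Theorem 5: sharpness of the convergence rate. Under a lower bound
`P(X_{k,n} > x) ≥ C exp(-κ(x))` with `exp(-κ(x)) ≥ C₁ exp(-B ψ(x))` for large `x` and a
growth bound on `q_φ`, for every `α < 2 - B(1 + C₂ ε)` the series
`Σ_{m,j} (mj)^{-α} P(Y⁺_{m,j} > ε)` diverges, where `a_{m,j} = ψ⁻¹(ln(mj))`. -/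
theorem sum_prob_pos_part_eq_top
    {Ω : Type*} [MeasurableSpace Ω] (P : Measure Ω) [IsProbabilityMeasure P]
    (φ ψ ψinv q : ℝ → ℝ) (hφ : IsOrliczN φ) (hψ : IsYoungFenchel φ ψ)
    (hq_mono : MonotoneOn q (Set.Ici 0)) (hq_nonneg : ∀ x, 0 ≤ x → 0 ≤ q x)
    (hψq : ∀ x, 0 ≤ x → ψ x = ∫ t in (0:ℝ)..x, q t)
    (hψinv : ∀ x, 0 ≤ x → 0 ≤ ψinv x ∧ ψ (ψinv x) = x)
    (X : ℕ → ℕ → Ω → ℝ)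
    (hsub : ∀ k n : ℕ, 1 ≤ k → 1 ≤ n → IsPhiSubGaussian φ P (X k n))
    (hτ : ∀ k n : ℕ, 1 ≤ k → 1 ≤ n → tauPhi φ P (X k n) = 1)
    (hindep : ProbabilityTheory.iIndepFun
      (fun p : ℕ × ℕ => X p.1 p.2) P)
    -- (i) lower bound on the right tail:
    (κ : ℝ → ℝ) (hκ_pos : ∀ x, 0 < x → 0 < κ x) (hκ_mono : StrictMonoOn κ (Set.Ioi 0))
    (C : ℝ) (hC : 0 < C)
    (htail : ∀ k n : ℕ, 1 ≤ k → 1 ≤ n → ∀ x : ℝ, 0 < x →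
      ENNReal.ofReal (C * Real.exp (-κ x)) ≤ P {ω | x < X k n ω})
    -- (ii) comparison of `κ` and `ψ`:
    (x₀ B C₁ : ℝ) (hx₀ : 0 < x₀) (hB : 0 < B) (hC₁ : 0 < C₁)
    (hκψ : ∀ x : ℝ, x₀ ≤ x → C₁ * Real.exp (-(B * ψ x)) ≤ Real.exp (-κ x))
    -- (iii) growth bound on `q_φ`:
    (ε C₂ : ℝ) (hε : 0 < ε) (hC₂ : ∀ x : ℝ, x₀ < x → q (x + ε) / ψ x ≤ C₂) :
    ∀ α : ℝ, α < 2 - B * (1 + C₂ * ε) →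
    (∑' m : ℕ, ∑' j : ℕ,
      ENNReal.ofReal (((((m + 1) * (j + 1) : ℕ)) : ℝ) ^ (-α)) *
        P {ω | ε < max (runMax X (m + 1) (j + 1) ω
          - ψinv (Real.log ((((m + 1) * (j + 1) : ℕ)) : ℝ))) 0}) = ⊤ :=
  sum_prob_pos_part_eq_top_general P φ ψ ψinv q hφ hψ hq_mono hq_nonneg hψq hψinv X hsub hτ hindep κ
    C hC htail x₀ B C₁ hC₁ hκψ ε C₂ hε hC₂
end

section
/- Let {X_{k,n} : k,n ≥ 1} be a double array of independent φ-subgaussian random variables with τ_φ(X_{k,n}) = 1 for all k,n, and let a_{m,j} = ψ^{−1}(ln(mj)). Assume: (i) there exists a strictly increasing function κ : (0,∞) → (0,∞) and a constant C > 0 such that P(X_{k,n} > x) ≥ C exp(−κ(x)) for all k,n ≥ 1 and x > 0; (ii) there exist x₀ > 0 and constants B, C₁ > 0 such that exp(−κ(x)) ≥ C₁ exp(−B ψ(x)) for all x ≥ x₀; (iii) for some ε > 0 there is C₂ < +∞ with sup_{x > x₀} q_φ(x + ε)/ψ(x) ≤ C₂. Then there exists a constant C′ > 0 such that for all m,j ≥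 1 with ψ^{−1}(ln(mj)) ≥ x₀, P(Y⁺_{m,j} > ε) ≥ C′ (mj)^{1 − B(1 + C₂ ε)}. -/
open MeasureTheory Real Filter Set

/-!
Put `N = mj` and `a = ψ⁻¹(ln N)`. Since `q(a + ε) ≤ C₂ ψ(a)`, the density bound gives
`ψ(a + ε) ≤ (1 + C₂ε) ln N`, so by (i) and (ii) every `X_{k,n}` exceeds `a + ε` with probability
at least `t = C C₁ N^{-β}`, `β = B(1 + C₂ε)`. By independence the maximum exceeds `a + ε` with
probability at least `1 - (1 - t)^N ≥ (1 - e⁻¹) min(tN, 1)`, and this is `≥ C' N^{1-β}` because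
`β ≥ 1`. That `B ≥ 1` is forced by `τ_φ = 1`: for every admissible MGF constant `b` Chernoff's bound
gives `P(X > x) ≤ exp(-ψ(x/b))`; with `b → 1` and the lower bound `C C₁ exp(-Bψ(x))` this yields
`(1 - B) ψ(x) ≤ -ln(C C₁)`, while `ψ(x) → ∞`.
-/

open ProbabilityTheory Topology ENNReal

lemma IsOrliczN.nonneg_s13 {φ : ℝ → ℝ} (hφ : IsOrliczN φ) (y : ℝ) : 0 ≤ φ y := by
  have h := hφ.convexOn.2 (mem_univ y) (mem_univ (-y)) (by norm_num : (0 : ℝ) ≤ 1 / 2)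
    (by norm_num : (0 : ℝ) ≤ 1 / 2) (by norm_num)
  simp only [smul_eq_mul, hφ.even] at h
  rw [show 1 / 2 * y + 1 / 2 * -y = 0 by ring, hφ.map_zero] at h
  linarith

namespace IsYoungFenchel

variable {φ ψ : ℝ → ℝ}

lemma mul_sub_le (hψ : IsYoungFenchel φ ψ) (x y : ℝ) : x * y - φ y ≤ ψ x :=
  (hψ x).1 ⟨y, rfl⟩

lemma pos (hψ : IsYoungFenchel φ ψ) (hφ : IsOrliczN φ) {x : ℝ} (hx : 0 < x) : 0 < ψ x := by
  obtain ⟨y, hy, hy0 : 0 < y⟩ :=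
    ((hφ.tendsto_zero.eventually (gt_mem_nhds hx)).and self_mem_nhdsWithin).exists
  rw [div_lt_iff₀ hy0] at hy
  linarith [hψ.mul_sub_le x y]

end IsYoungFenchel

/-- Chernoff's bound, optimised over the exponent through the Young–Fenchel transform. -/
lemma PhiMGF.measureReal_lt_le_exp_neg {φ ψ : ℝ → ℝ} (hφ : ∀ y, 0 ≤ φ y)
    (hψ : IsYoungFenchel φ ψ) {Ω : Type*} [MeasurableSpace Ω] {P : Measure Ω}
    [IsProbabilityMeasure P] {X : Ω → ℝ} {b x : ℝ} (hX : PhiMGF φ P X b) (hx : 0 ≤ x) :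
    P.real {ω | x < X ω} ≤ exp (-ψ (x / b)) := by
  rcases (measureReal_nonneg : 0 ≤ P.real {ω | x < X ω}).eq_or_lt with hp | hp
  · rw [← hp]; positivity
  rw [← log_le_iff_le_exp hp, le_neg]
  refine (hψ (x / b)).2 ?_
  rintro _ ⟨y, rfl⟩
  rcases le_or_gt y 0 with hy | hy
  · have hxy : x / b * y ≤ 0 := mul_nonpos_of_nonneg_of_nonpos (div_nonneg hx hX.1.le) hy
    linarith [hφ y, log_nonpos hp.le measureReal_le_one]
  · obtain ⟨hint, hmgf⟩ := hX.2 (y / b)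
    have hchernoff : P.real {ω | x < X ω} ≤ exp (φ y - x / b * y) :=
      calc P.real {ω | x < X ω} ≤ P.real {ω | x ≤ X ω} :=
          measureReal_mono fun ω (h : x < X ω) => h.le
        _ ≤ exp (-(y / b) * x) * mgf X P (y / b) :=
          measure_ge_le_exp_mul_mgf x (div_pos hy hX.1).le hint
        _ ≤ exp (-(y / b) * x) * exp (φ (b * (y / b))) := by gcongr; exact hmgf
        _ = exp (φ y - x / b * y) := by
          rw [← exp_add, mul_div_cancel₀ y hX.1.ne']; ring_nf
    linarith [(log_le_iff_le_exp hp).2 hchernoff]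

structure IsMonotoneDensity (ψ q : ℝ → ℝ) : Prop where
  density_monotoneOn : MonotoneOn q (Ici 0)
  density_nonneg : ∀ x, 0 ≤ x → 0 ≤ q x
  eq_integral : ∀ x, 0 ≤ x → ψ x = ∫ t in (0 : ℝ)..x, q t

namespace IsMonotoneDensity

variable {ψ q : ℝ → ℝ} {x y : ℝ}

lemma intervalIntegrable (hq : IsMonotoneDensity ψ q) (hx : 0 ≤ x) (hxy : x ≤ y) :
    IntervalIntegrable q volume x y :=
  (hq.density_monotoneOn.mono fun _ ht => (uIcc_of_le hxy ▸ ht).1.trans' hx).intervalIntegrable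

lemma sub_eq_integral (hq : IsMonotoneDensity ψ q) (hx : 0 ≤ x) (hxy : x ≤ y) :
    ψ y - ψ x = ∫ t in x..y, q t := by
  rw [hq.eq_integral x hx, hq.eq_integral y (hx.trans hxy), sub_eq_iff_eq_add',
    intervalIntegral.integral_add_adjacent_intervals (hq.intervalIntegrable le_rfl hx)
      (hq.intervalIntegrable hx hxy)]

lemma monotoneOn (hq : IsMonotoneDensity ψ q) : MonotoneOn ψ (Ici 0) := fun x hx y _ hxy => by
  have h : 0 ≤ ∫ t in x..y, q t :=
    intervalIntegral.integral_nonneg hxy fun t ht => hq.density_nonneg t ((mem_Ici.1 hx).trans ht.1)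
  linarith [hq.sub_eq_integral hx hxy]

lemma le_add_mul (hq : IsMonotoneDensity ψ q) (hx : 0 ≤ x) (hxy : x ≤ y) :
    ψ y ≤ ψ x + (y - x) * q y := by
  have h : ∫ t in x..y, q t ≤ ∫ _ in x..y, q y :=
    intervalIntegral.integral_mono_on hxy
      (hq.intervalIntegrable hx hxy)
      intervalIntegrable_const
      fun t ht => hq.density_monotoneOn (hx.trans ht.1) (hx.trans hxy) ht.2
  rw [intervalIntegral.integral_const, smul_eq_mul] at h
  linarith [hq.sub_eq_integral hx hxy]

lemma tendsto_nhdsGT (hq : IsMonotoneDensity ψ q) (hx : 0 ≤ x) :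
    Tendsto ψ (𝓝[>] x) (𝓝 (ψ x)) := by
  have hlin : Tendsto (fun y => ψ x + (y - x) * q (x + 1)) (𝓝[>] x) (𝓝 (ψ x)) := by
    have h : Continuous fun y => ψ x + (y - x) * q (x + 1) := by fun_prop
    simpa using (h.tendsto x).mono_left nhdsWithin_le_nhds
  refine tendsto_of_tendsto_of_tendsto_of_le_of_le' tendsto_const_nhds hlin ?_ ?_
  · filter_upwards [self_mem_nhdsWithin] with y (hy : x < y)
    exact hq.monotoneOn hx (hx.trans hy.le) hy.le
  · filter_upwards [Ioo_mem_nhdsGT (lt_add_one x)] with y hy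
    calc ψ y ≤ ψ x + (y - x) * q y := hq.le_add_mul hx hy.1.le
      _ ≤ ψ x + (y - x) * q (x + 1) := by
        have hqy : q y ≤ q (x + 1) :=
          hq.density_monotoneOn (hx.trans hy.1.le) (by simp only [mem_Ici]; linarith) hy.2.le
        have hyx : 0 ≤ y - x := by linarith [hy.1]
        gcongr

lemma le_mul_of_forall_lt (hq : IsMonotoneDensity ψ q) (hx : 0 ≤ x) {c C : ℝ}
    (h : ∀ y, x < y → c ≤ C * ψ y) : c ≤ C * ψ x :=
  ge_of_tendsto ((hq.tendsto_nhdsGT hx).const_mul C) (eventually_nhdsWithin_of_forall h)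

lemma add_le_one_add_mul {x₀ ε C₂ : ℝ} (hq : IsMonotoneDensity ψ q)
    (hψ : ∀ y, x₀ < y → 0 < ψ y) (hC₂ : ∀ y, x₀ < y → q (y + ε) / ψ y ≤ C₂) (hε : 0 ≤ ε)
    (hx : 0 ≤ x) (hx₀ : x₀ ≤ x) : ψ (x + ε) ≤ (1 + C₂ * ε) * ψ x := by
  have hqx : q (x + ε) ≤ C₂ * ψ x := hq.le_mul_of_forall_lt hx fun y hy =>
    calc q (x + ε) ≤ q (y + ε) :=
          hq.density_monotoneOn (add_nonneg hx hε) (by simp only [mem_Ici]; linarith) (by linarith)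
      _ ≤ C₂ * ψ y := (div_le_iff₀ (hψ y (hx₀.trans_lt hy))).1 (hC₂ y (hx₀.trans_lt hy))
  calc ψ (x + ε) ≤ ψ x + (x + ε - x) * q (x + ε) := hq.le_add_mul hx (by linarith)
    _ ≤ ψ x + ε * (C₂ * ψ x) := by rw [add_sub_cancel_left]; gcongr
    _ = (1 + C₂ * ε) * ψ x := by ring

lemma le_of_forall_div_le (hq : IsMonotoneDensity ψ q) {S : Set ℝ} (hS : sInf S = 1)
    (hS₀ : ∀ b ∈ S, 0 < b) (hx : 0 ≤ x) (h : ∀ b ∈ S, ψ (x / b) ≤ y) : ψ x ≤ y := by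
  have hne : S.Nonempty := by
    by_contra hempty
    rw [not_nonempty_iff_eq_empty.1 hempty, Real.sInf_empty] at hS
    exact zero_ne_one hS
  have hbdd : BddBelow S := ⟨0, fun b hb => (hS₀ b hb).le⟩
  have hqx : 0 ≤ x * q x := mul_nonneg hx (hq.density_nonneg x hx)
  refine le_of_forall_pos_le_add fun η hη => ?_
  obtain ⟨b, hbS, hb⟩ := Real.lt_sInf_add_pos hne (div_pos hη (by linarith : 0 < x * q x + 1))
  rw [hS, ← sub_lt_iff_lt_add', lt_div_iff₀ (by linarith)] at hb
  have hb₁ : 1 ≤ b := hS ▸ csInf_le hbdd hbS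
  have hxb : x - x / b ≤ x * (b - 1) := by
    rw [show x - x / b = x * (b - 1) / b by field_simp]
    exact div_le_self (by nlinarith) hb₁
  calc ψ x ≤ ψ (x / b) + (x - x / b) * q x :=
        hq.le_add_mul (div_nonneg hx (hS₀ b hbS).le) (div_le_self hx hb₁)
    _ ≤ y + x * (b - 1) * q x := by have := hq.density_nonneg x hx; gcongr; exact h b hbS
    _ ≤ y + η := by nlinarith

end IsMonotoneDensity

lemma one_le_of_ofReal_le_measure_lt {φ ψ q : ℝ → ℝ} (hφ : ∀ y, 0 ≤ φ y)
    (hψ : IsYoungFenchel φ ψ) (hq : IsMonotoneDensity ψ q) {Ω : Type*} [MeasurableSpace Ω]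
    {P : Measure Ω} [IsProbabilityMeasure P] {X : Ω → ℝ} (hτ : tauPhi φ P X = 1)
    {x₀ c B : ℝ} (hc : 0 < c)
    (hlow : ∀ x, x₀ ≤ x → ENNReal.ofReal (c * exp (-(B * ψ x))) ≤ P {ω | x < X ω}) :
    1 ≤ B := by
  have key : ∀ x, max x₀ 0 ≤ x → ψ x ≤ B * ψ x - log c := by
    intro x hx
    have hx₀ : 0 ≤ x := le_of_max_le_right hx
    refine hq.le_of_forall_div_le hτ (fun b hb => hb.1) hx₀ fun b hb => ?_
    have hle : c * exp (-(B * ψ x)) ≤ exp (-ψ (x / b)) :=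
      ((ENNReal.ofReal_le_iff_le_toReal (measure_ne_top _ _)).1
        (hlow x (le_of_max_le_left hx))).trans (hb.measureReal_lt_le_exp_neg hφ hψ hx₀)
    have hlog := log_le_log (by positivity) hle
    rw [log_mul hc.ne' (exp_pos _).ne', log_exp, log_exp] at hlog
    linarith
  by_contra! hB
  set x := max (max x₀ 0) (φ 1 + (|log c| + 1) / (1 - B))
  have hgrowth : x - φ 1 ≤ ψ x := by simpa using hψ.mul_sub_le x 1
  have hlarge : (|log c| + 1) / (1 - B) ≤ ψ x := by
    linarith [le_max_right (max x₀ 0) (φ 1 + (|log c| + 1) / (1 - B))]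
  rw [div_le_iff₀' (by linarith)] at hlarge
  linarith [key x (le_max_left _ _), neg_abs_le (log c)]

lemma one_sub_pow_le_measure_exists_lt {Ω ι : Type*} [MeasurableSpace Ω] {P : Measure Ω}
    [IsProbabilityMeasure P] {Y : ι → Ω → ℝ} (hY : iIndepFun Y P) (S : Finset ι)
    (hmeas : ∀ i ∈ S, AEMeasurable (Y i) P) {c : ℝ} {t : ℝ≥0∞}
    (ht : ∀ i ∈ S, t ≤ P {ω | c < Y i ω}) :
    1 - (1 - t) ^ S.card ≤ P {ω | ∃ i ∈ S, c < Y i ω} := by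
  have hcompl : {ω | ∃ i ∈ S, c < Y i ω}ᶜ = ⋂ i ∈ S, Y i ⁻¹' Iic c := by ext; simp
  have hfactor : ∀ i ∈ S, P (Y i ⁻¹' Iic c) ≤ 1 - t := fun i hi => by
    rw [show Y i ⁻¹' Iic c = (Y i ⁻¹' Ioi c)ᶜ by ext; simp,
      prob_compl_eq_one_sub₀ ((hmeas i hi).nullMeasurable measurableSet_Ioi)]
    exact tsub_le_tsub_left (ht i hi) 1
  have hmiss : P {ω | ∃ i ∈ S, c < Y i ω}ᶜ ≤ (1 - t) ^ S.card := by
    rw [hcompl, hY.measure_inter_preimage_eq_mul S fun _ _ => measurableSet_Iic,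
      ← Finset.prod_const]
    exact Finset.prod_le_prod' hfactor
  rw [tsub_le_iff_right]
  calc 1 = P univ := measure_univ.symm
    _ ≤ P {ω | ∃ i ∈ S, c < Y i ω} + P {ω | ∃ i ∈ S, c < Y i ω}ᶜ :=
        measure_univ_le_add_compl _
    _ ≤ _ := by gcongr

lemma mul_min_le_one_sub_pow {t : ℝ} (ht₀ : 0 ≤ t) (ht₁ : t ≤ 1) (N : ℕ) :
    (1 - exp (-1)) * min (t * N) 1 ≤ 1 - (1 - t) ^ N := by
  have hpow : (1 - t) ^ N ≤ exp (-(t * N)) :=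
    calc (1 - t) ^ N ≤ exp (-t) ^ N := pow_le_pow_left₀ (by linarith) (one_sub_le_exp_neg t) N
      _ = exp (-(t * N)) := by rw [← exp_nat_mul]; ring_nf
  have hchord : ∀ u, 0 ≤ u → u ≤ 1 → exp (-u) ≤ 1 - u + u * exp (-1) := fun u hu₀ hu₁ => by
    simpa using convexOn_exp.2 (mem_univ 0) (mem_univ (-1)) (by linarith) hu₀ (by ring)
  rcases le_total (t * N) 1 with h | h
  · rw [min_eq_left h]
    linarith [hchord (t * N) (by positivity) h]
  · rw [min_eq_right h]
    linarith [exp_le_exp.2 (by linarith : -(t * N) ≤ -1)]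

lemma ofReal_mul_min_le_measure_exists_lt {Ω ι : Type*} [MeasurableSpace Ω] {P : Measure Ω}
    [IsProbabilityMeasure P] {Y : ι → Ω → ℝ} (hY : iIndepFun Y P) (S : Finset ι)
    (hmeas : ∀ i ∈ S, AEMeasurable (Y i) P) {c t : ℝ} (ht₀ : 0 ≤ t) (ht₁ : t ≤ 1)
    (ht : ∀ i ∈ S, ENNReal.ofReal t ≤ P {ω | c < Y i ω}) :
    ENNReal.ofReal ((1 - exp (-1)) * min (t * S.card) 1) ≤ P {ω | ∃ i ∈ S, c < Y i ω} :=
  calc ENNReal.ofReal ((1 - exp (-1)) * min (t * S.card) 1)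
      ≤ ENNReal.ofReal (1 - (1 - t) ^ S.card) :=
        ENNReal.ofReal_le_ofReal (mul_min_le_one_sub_pow ht₀ ht₁ _)
    _ = 1 - (1 - ENNReal.ofReal t) ^ S.card := by
        rw [ENNReal.ofReal_sub _ (pow_nonneg (by linarith) _), ENNReal.ofReal_one,
          ENNReal.ofReal_pow (by linarith), ENNReal.ofReal_sub _ ht₀, ENNReal.ofReal_one]
    _ ≤ P {ω | ∃ i ∈ S, c < Y i ω} := one_sub_pow_le_measure_exists_lt hY S hmeas ht

lemma min_mul_rpow_le_min_mul {c β N : ℝ} (hβ : 1 ≤ β) (hN : 1 ≤ N) :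
    min c 1 * N ^ (1 - β) ≤ min (c * N ^ (-β) * N) 1 := by
  have hN₀ : 0 < N := by linarith
  have hpow₀ : 0 ≤ N ^ (1 - β) := rpow_nonneg hN₀.le _
  have hpow₁ : N ^ (1 - β) ≤ 1 := rpow_le_one_of_one_le_of_nonpos hN (by linarith)
  refine le_min ?_ ?_
  · calc min c 1 * N ^ (1 - β) ≤ c * N ^ (1 - β) := by gcongr; exact min_le_left c 1
      _ = c * N ^ (-β) * N := by rw [sub_eq_neg_add, rpow_add_one hN₀.ne', mul_assoc]
  · calc min c 1 * N ^ (1 - β) ≤ 1 * 1 := by gcongr; exact min_le_right c 1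
      _ = 1 := one_mul 1

lemma le_runMax {Ω : Type*} (X : ℕ → ℕ → Ω → ℝ) {m j k n : ℕ} (hk : k ∈ Finset.Icc 1 m)
    (hn : n ∈ Finset.Icc 1 j) (ω : Ω) : X k n ω ≤ runMax X m j ω := by
  rw [Finset.mem_Icc] at hk hn
  refine le_csSup (Set.Finite.bddAbove ?_) ⟨k, n, hk.1, hk.2, hn.1, hn.2, rfl⟩
  refine ((Finset.Icc 1 m ×ˢ Finset.Icc 1 j).image fun p => X p.1 p.2 ω).finite_toSet.subset ?_
  rintro _ ⟨k', n', hk'₁, hk'₂, hn'₁, hn'₂, rfl⟩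
  simp only [Finset.coe_image, Finset.coe_product, Finset.coe_Icc]
  exact ⟨(k', n'), ⟨⟨hk'₁, hk'₂⟩, hn'₁, hn'₂⟩, rfl⟩

lemma ofReal_mul_min_le_measure_lt_runMax {Ω : Type*} [MeasurableSpace Ω] {P : Measure Ω}
    [IsProbabilityMeasure P] {X : ℕ → ℕ → Ω → ℝ}
    (hX : iIndepFun (fun p : ℕ × ℕ => X p.1 p.2) P)
    (hmeas : ∀ k n, 1 ≤ k → 1 ≤ n → AEMeasurable (X k n) P) {c t : ℝ} (ht₀ : 0 ≤ t)
    (ht₁ : t ≤ 1) (ht : ∀ k n, 1 ≤ k → 1 ≤ n → ENNReal.ofReal t ≤ P {ω | c < X k n ω})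
    (m j : ℕ) :
    ENNReal.ofReal ((1 - exp (-1)) * min (t * (m * j : ℕ)) 1) ≤ P {ω | c < runMax X m j ω} := by
  set S := Finset.Icc 1 m ×ˢ Finset.Icc 1 j
  have hS : ∀ p ∈ S, 1 ≤ p.1 ∧ 1 ≤ p.2 := fun p hp => by
    simp only [S, Finset.mem_product, Finset.mem_Icc] at hp
    exact ⟨hp.1.1, hp.2.1⟩
  have hcard : S.card = m * j := by simp [S]
  calc ENNReal.ofReal ((1 - exp (-1)) * min (t * (m * j : ℕ)) 1)
      = ENNReal.ofReal ((1 - exp (-1)) * min (t * S.card) 1) := by rw [hcard]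
    _ ≤ P {ω | ∃ p ∈ S, c < X p.1 p.2 ω} :=
        ofReal_mul_min_le_measure_exists_lt hX S (fun p hp => hmeas _ _ (hS p hp).1 (hS p hp).2)
          ht₀ ht₁ fun p hp => ht _ _ (hS p hp).1 (hS p hp).2
    _ ≤ P {ω | c < runMax X m j ω} := measure_mono fun ω ⟨p, hp, hlt⟩ =>
        hlt.trans_le (le_runMax X (Finset.mem_product.1 hp).1 (Finset.mem_product.1 hp).2 ω)

theorem prob_pos_part_ge_general
    {Ω : Type*} [MeasurableSpace Ω] (P : Measure Ω) [IsProbabilityMeasure P]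
    (φ ψ ψinv q : ℝ → ℝ) (hφ : IsOrliczN φ) (hψ : IsYoungFenchel φ ψ)
    (hq_mono : MonotoneOn q (Set.Ici 0)) (hq_nonneg : ∀ x, 0 ≤ x → 0 ≤ q x)
    (hψq : ∀ x, 0 ≤ x → ψ x = ∫ t in (0:ℝ)..x, q t)
    (hψinv : ∀ x, 0 ≤ x → 0 ≤ ψinv x ∧ ψ (ψinv x) = x)
    (X : ℕ → ℕ → Ω → ℝ)
    (hsub : ∀ k n : ℕ, 1 ≤ k → 1 ≤ n → IsPhiSubGaussian φ P (X k n))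
    (hτ : ∀ k n : ℕ, 1 ≤ k → 1 ≤ n → tauPhi φ P (X k n) = 1)
    (hindep : ProbabilityTheory.iIndepFun
      (fun p : ℕ × ℕ => X p.1 p.2) P)
    (κ : ℝ → ℝ)
    (C : ℝ) (hC : 0 < C)
    (htail : ∀ k n : ℕ, 1 ≤ k → 1 ≤ n → ∀ x : ℝ, 0 < x →
      ENNReal.ofReal (C * Real.exp (-κ x)) ≤ P {ω | x < X k n ω})
    (x₀ B C₁ : ℝ) (hx₀ : 0 < x₀) (hC₁ : 0 < C₁)
    (hκψ : ∀ x : ℝ, x₀ ≤ x → C₁ * Real.exp (-(B * ψ x)) ≤ Real.exp (-κ x))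
    (ε C₂ : ℝ) (hε : 0 < ε) (hC₂ : ∀ x : ℝ, x₀ < x → q (x + ε) / ψ x ≤ C₂) :
    ∃ C' : ℝ, 0 < C' ∧ ∀ m j : ℕ, 1 ≤ m → 1 ≤ j →
      x₀ ≤ ψinv (Real.log ((m * j : ℕ) : ℝ)) →
      ENNReal.ofReal (C' * ((m * j : ℕ) : ℝ) ^ (1 - B * (1 + C₂ * ε)))
        ≤ P {ω | ε < max (runMax X m j ω - ψinv (Real.log ((m * j : ℕ) : ℝ))) 0} := by
  have hq : IsMonotoneDensity ψ q := ⟨hq_mono, hq_nonneg, hψq⟩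
  have hψpos : ∀ x, x₀ < x → 0 < ψ x := fun x hx => hψ.pos hφ (hx₀.trans hx)
  have hlow : ∀ k n, 1 ≤ k → 1 ≤ n → ∀ x, x₀ ≤ x →
      ENNReal.ofReal (C * C₁ * exp (-(B * ψ x))) ≤ P {ω | x < X k n ω} :=
    fun k n hk hn x hx => (ENNReal.ofReal_le_ofReal (by rw [mul_assoc]; gcongr; exact hκψ x hx))
      |>.trans (htail k n hk hn x (hx₀.trans_le hx))
  have hB₁ : 1 ≤ B := one_le_of_ofReal_le_measure_lt hφ.nonneg_s13 hψ hq (hτ 1 1 le_rfl le_rfl)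
    (mul_pos hC hC₁) (hlow 1 1 le_rfl le_rfl)
  have hC₂₀ : 0 ≤ C₂ := (hC₂ (x₀ + 1) (by linarith)).trans'
    (div_nonneg (hq_nonneg _ (by linarith)) (hψpos _ (by linarith)).le)
  have hβ : 1 ≤ B * (1 + C₂ * ε) := by nlinarith [mul_nonneg hC₂₀ hε.le]
  refine ⟨(1 - exp (-1)) * min (C * C₁) 1, mul_pos (by simp) (lt_min (mul_pos hC hC₁) one_pos),
    fun m j hm hj ha => ?_⟩
  set N := m * j
  set a := ψinv (Real.log N)
  have hN : (1 : ℝ) ≤ N := by exact_mod_cast Nat.mul_le_mul hm hj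
  obtain ⟨ha₀, hψa⟩ := hψinv _ (log_nonneg hN)
  have hψaε : ψ (a + ε) ≤ (1 + C₂ * ε) * Real.log N :=
    hψa ▸ hq.add_le_one_add_mul hψpos hC₂ hε.le ha₀ ha
  have ht : ∀ k n, 1 ≤ k → 1 ≤ n → ENNReal.ofReal (C * C₁ * (N : ℝ) ^ (-(B * (1 + C₂ * ε))))
      ≤ P {ω | a + ε < X k n ω} := by
    refine fun k n hk hn => (ENNReal.ofReal_le_ofReal ?_).trans (hlow k n hk hn _ (by linarith))
    rw [rpow_def_of_pos (by linarith)]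
    gcongr
    nlinarith
  have ht₁ : C * C₁ * (N : ℝ) ^ (-(B * (1 + C₂ * ε))) ≤ 1 :=
    ENNReal.ofReal_le_one.1 ((ht 1 1 le_rfl le_rfl).trans prob_le_one)
  calc ENNReal.ofReal ((1 - exp (-1)) * min (C * C₁) 1 * (N : ℝ) ^ (1 - B * (1 + C₂ * ε)))
      ≤ ENNReal.ofReal ((1 - exp (-1)) *
          min (C * C₁ * (N : ℝ) ^ (-(B * (1 + C₂ * ε))) * N) 1) := by
        rw [mul_assoc]
        exact ENNReal.ofReal_le_ofReal (mul_le_mul_of_nonneg_left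
          (min_mul_rpow_le_min_mul hβ hN) (by simp))
    _ ≤ P {ω | a + ε < runMax X m j ω} :=
        ofReal_mul_min_le_measure_lt_runMax hindep
          (fun k n hk hn => (hsub k n hk hn).1.aemeasurable) (by positivity) ht₁ ht m j
    _ ≤ P {ω | ε < max (runMax X m j ω - a) 0} :=
        measure_mono fun ω (hω : a + ε < runMax X m j ω) =>
          lt_max_of_lt_left (show ε < runMax X m j ω - a by linarith)

/-- under the assumptions of Theorem 5, there exists `C' > 0` such
that `P(Y⁺_{m,j} > ε) ≥ C' (mj)^{1 - B(1 + C₂ ε)}` for all `m, j ≥ 1` with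
`ψ⁻¹(ln(mj)) ≥ x₀`, where `a_{m,j} = ψ⁻¹(ln(mj))`. -/
theorem prob_pos_part_ge
    {Ω : Type*} [MeasurableSpace Ω] (P : Measure Ω) [IsProbabilityMeasure P]
    (φ ψ ψinv q : ℝ → ℝ) (hφ : IsOrliczN φ) (hψ : IsYoungFenchel φ ψ)
    (hq_mono : MonotoneOn q (Set.Ici 0)) (hq_nonneg : ∀ x, 0 ≤ x → 0 ≤ q x)
    (hψq : ∀ x, 0 ≤ x → ψ x = ∫ t in (0:ℝ)..x, q t)
    (hψinv : ∀ x, 0 ≤ x → 0 ≤ ψinv x ∧ ψ (ψinv x) = x)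
    (X : ℕ → ℕ → Ω → ℝ)
    (hsub : ∀ k n : ℕ, 1 ≤ k → 1 ≤ n → IsPhiSubGaussian φ P (X k n))
    (hτ : ∀ k n : ℕ, 1 ≤ k → 1 ≤ n → tauPhi φ P (X k n) = 1)
    (hindep : ProbabilityTheory.iIndepFun
      (fun p : ℕ × ℕ => X p.1 p.2) P)
    (κ : ℝ → ℝ) (hκ_pos : ∀ x, 0 < x → 0 < κ x) (hκ_mono : StrictMonoOn κ (Set.Ioi 0))
    (C : ℝ) (hC : 0 < C)
    (htail : ∀ k n : ℕ, 1 ≤ k → 1 ≤ n → ∀ x : ℝ, 0 < x →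
      ENNReal.ofReal (C * Real.exp (-κ x)) ≤ P {ω | x < X k n ω})
    (x₀ B C₁ : ℝ) (hx₀ : 0 < x₀) (hB : 0 < B) (hC₁ : 0 < C₁)
    (hκψ : ∀ x : ℝ, x₀ ≤ x → C₁ * Real.exp (-(B * ψ x)) ≤ Real.exp (-κ x))
    (ε C₂ : ℝ) (hε : 0 < ε) (hC₂ : ∀ x : ℝ, x₀ < x → q (x + ε) / ψ x ≤ C₂) :
    ∃ C' : ℝ, 0 < C' ∧ ∀ m j : ℕ, 1 ≤ m → 1 ≤ j →
      x₀ ≤ ψinv (Real.log ((m * j : ℕ) : ℝ)) →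
      ENNReal.ofReal (C' * ((m * j : ℕ) : ℝ) ^ (1 - B * (1 + C₂ * ε)))
        ≤ P {ω | ε < max (runMax X m j ω - ψinv (Real.log ((m * j : ℕ) : ℝ))) 0} :=
  prob_pos_part_ge_general P φ ψ ψinv q hφ hψ hq_mono hq_nonneg hψq hψinv X hsub hτ hindep κ C hC
    htail x₀ B C₁ hx₀ hC₁ hκψ ε C₂ hε hC₂
end
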